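/- arXiv:2106.04105 — 5 statements merged into one kernel-verified Lean document; each statement's English description precedes it below -/
import Mathlib

section
/- Let α ∈ (0,1], let μ be a probability distribution on the k-element subsets of [n] = {1,…,n}, and let p_i = (1/k)·∑_{S ∋ i} μ(S) be its single-element marginals. If the map (z₁,…,zₙ) ↦ log g_μ(z₁^α,…,zₙ^α) is concave on the positive orthant ℝ^n_{>0} (i.e., μ is α-fractionally log-concave), then for all (z₁,…,zₙ) ∈ ℝ^n_{≥0} one has g_μ(z₁,…,zₙ) ≤ (∑_{i=1}^n p_i z_i^{1/α})^{αk}. -/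
open Finset

/-- The generating polynomial `g_μ(z) = ∑_S μ(S) ∏_{i∈S} z_i`. -/
noncomputable def genPoly {n : ℕ} (μ : Finset (Fin n) → ℝ) (z : Fin n → ℝ) : ℝ :=
  ∑ S : Finset (Fin n), μ S * ∏ i ∈ S, z i

/-- The `k → 1` down operator: `(ν D_{k→1})(i) = (1/k) ∑_{S ∋ i} ν(S)`. -/
noncomputable def down1 {n : ℕ} (k : ℕ) (ν : Finset (Fin n) → ℝ) (i : Fin n) : ℝ :=
  (1 / (k : ℝ)) * ∑ S ∈ Finset.univ.filter (fun S => i ∈ S), ν S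

/-!
Write `p = down1 k μ` for the marginals and `F z = log g_μ(z^α)`. Since `μ` lives on `k`-sets,
`∑ p_i = 1` and `∂_i g_μ` at a diagonal point `(c, …, c)` equals `k c^(k-1) p_i`. Hence for `x > 0`
and `s = ∑ p_i x_i` the derivative of `F` at `(s, …, s)` in the direction `x - (s, …, s)` is a
multiple of `∑ p_i (x_i - s) = 0`, and concavity of `F` along that segment gives
`F x ≤ F (s, …, s) = α k log s`. Putting `x_i = z_i^(1/α)` proves the bound for `z > 0`, and
both sides are continuous in `z`, so it persists on the closed orthant.
-/

theorem ConcaveOn.le_add_of_hasDerivAt_lineMap {E : Type*} [AddCommGroup E] [Module ℝ E]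
    {s : Set E} {f : E → ℝ} (hf : ConcaveOn ℝ s f) {a b : E} (ha : a ∈ s) (hb : b ∈ s)
    {f' : ℝ} (hd : HasDerivAt (fun t : ℝ => f (AffineMap.lineMap a b t)) f' 0) :
    f b ≤ f a + f' := by
  have h := (hf.comp_affineMap (AffineMap.lineMap a b : ℝ →ᵃ[ℝ] E)).slope_le_of_hasDerivAt
    (by simpa using ha) (by simpa using hb) one_pos (by exact hd)
  simp only [slope_def_field, Function.comp_apply, AffineMap.lineMap_apply_one,
    AffineMap.lineMap_apply_zero, sub_zero, div_one] at h
  linarith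

section GenPoly

variable {n k : ℕ} {μ : Finset (Fin n) → ℝ}

theorem sum_mul_sum_eq_sum_sum_filter_mul (μ : Finset (Fin n) → ℝ) (f : Fin n → ℝ) :
    ∑ S, μ S * ∑ i ∈ S, f i = ∑ i, (∑ S ∈ univ.filter (fun S => i ∈ S), μ S) * f i := by
  simp_rw [mul_sum, sum_mul]
  exact sum_comm' fun S i => by simp

theorem natCast_mul_down1 (hμk : ∀ S, μ S ≠ 0 → S.card = k) (i : Fin n) :
    k * down1 k μ i = ∑ S ∈ univ.filter (fun S => i ∈ S), μ S := by
  rcases eq_or_ne k 0 with rfl | hk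
  · rw [Nat.cast_zero, zero_mul]
    refine (sum_eq_zero fun S hS => ?_).symm
    by_contra h
    simp [card_eq_zero.mp (hμk S h)] at hS
  · simp [down1, hk]

theorem sum_mul_sum_eq_natCast_mul_sum_down1 (hμk : ∀ S, μ S ≠ 0 → S.card = k)
    (f : Fin n → ℝ) : ∑ S, μ S * ∑ i ∈ S, f i = k * ∑ i, down1 k μ i * f i := by
  simp_rw [sum_mul_sum_eq_sum_sum_filter_mul, mul_sum, ← mul_assoc, natCast_mul_down1 hμk]

theorem sum_down1 (hμk : ∀ S, μ S ≠ 0 → S.card = k) (hμ1 : ∑ S, μ S = 1) (hk : k ≠ 0) :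
    ∑ i, down1 k μ i = 1 := by
  have h := sum_mul_sum_eq_natCast_mul_sum_down1 hμk fun _ => 1
  have hcard : ∀ S, μ S * ∑ _i ∈ S, (1 : ℝ) = μ S * k := fun S => by
    by_cases h : μ S = 0 <;> simp [h, hμk]
  simp only [hcard, ← sum_mul, hμ1, one_mul, mul_one] at h
  exact (mul_eq_left₀ (by exact_mod_cast hk)).mp h.symm

theorem down1_nonneg (hμ0 : ∀ S, 0 ≤ μ S) (i : Fin n) : 0 ≤ down1 k μ i :=
  mul_nonneg (by positivity) (sum_nonneg fun S _ => hμ0 S)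

theorem genPoly_const (hμk : ∀ S, μ S ≠ 0 → S.card = k) (hμ1 : ∑ S, μ S = 1) (c : ℝ) :
    genPoly μ (fun _ => c) = c ^ k := by
  have hcard : ∀ S, μ S * ∏ _i ∈ S, c = μ S * c ^ k := fun S => by
    by_cases h : μ S = 0 <;> simp [h, hμk]
  simp only [genPoly, hcard, ← sum_mul, hμ1, one_mul]

theorem genPoly_eq_one_of_card_eq_zero (hμk : ∀ S, μ S ≠ 0 → S.card = 0)
    (hμ1 : ∑ S, μ S = 1) (z : Fin n → ℝ) : genPoly μ z = 1 := by
  have hempty : ∀ S, μ S * ∏ i ∈ S, z i = μ S := fun S => by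
    by_cases h : μ S = 0
    · simp [h]
    · simp [card_eq_zero.mp (hμk S h)]
  simp only [genPoly, hempty, hμ1]

theorem genPoly_pos (hμ0 : ∀ S, 0 ≤ μ S) (hμ1 : ∑ S, μ S = 1) {y : Fin n → ℝ}
    (hy : ∀ i, 0 < y i) : 0 < genPoly μ y := by
  obtain ⟨S, -, hS⟩ := exists_ne_zero_of_sum_ne_zero (hμ1 ▸ one_ne_zero : ∑ S, μ S ≠ 0)
  exact sum_pos' (fun T _ => mul_nonneg (hμ0 T) (prod_nonneg fun i _ => (hy i).le))
    ⟨S, mem_univ S, mul_pos ((hμ0 S).lt_of_ne' hS) (prod_pos fun i _ => hy i)⟩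

theorem continuous_genPoly (μ : Finset (Fin n) → ℝ) : Continuous (genPoly μ) :=
  continuous_finsetSum _ fun _ _ =>
    continuous_const.mul (continuous_finsetProd _ fun i _ => continuous_apply i)

theorem hasDerivAt_genPoly_comp (μ : Finset (Fin n) → ℝ) {γ : ℝ → Fin n → ℝ} {γ' : Fin n → ℝ}
    {t : ℝ} (hγ : ∀ i, HasDerivAt (fun t => γ t i) (γ' i) t) :
    HasDerivAt (fun t => genPoly μ (γ t))
      (∑ S, μ S * ∑ i ∈ S, (∏ j ∈ S.erase i, γ t j) * γ' i) t := by
  unfold genPoly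
  simpa only [smul_eq_mul] using
    HasDerivAt.fun_sum fun S _ => (HasDerivAt.fun_finsetProd fun i _ => hγ i).const_mul (μ S)

theorem hasDerivAt_genPoly_rpow_lineMap_const (hμk : ∀ S, μ S ≠ 0 → S.card = k) {α s : ℝ}
    (hs : 0 < s) (x : Fin n → ℝ) :
    HasDerivAt (fun t : ℝ => genPoly μ (fun i => AffineMap.lineMap (fun _ => s) x t i ^ α))
      (k * ((s ^ α) ^ (k - 1) * (α * s ^ (α - 1))) * ∑ i, down1 k μ i * (x i - s)) 0 := by
  have hγ : ∀ i, HasDerivAt (fun t : ℝ => AffineMap.lineMap (fun _ => s) x t i ^ α)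
      ((x i - s) * α * s ^ (α - 1)) 0 := fun i => by
    simpa [AffineMap.pi_lineMap_apply] using
      (AffineMap.hasDerivAt_lineMap (a := s) (b := x i) (x := 0)).rpow_const (p := α)
        (Or.inl (by simp [hs.ne']))
  refine (hasDerivAt_genPoly_comp μ hγ).congr_deriv ?_
  have hterm : ∀ S : Finset (Fin n),
      μ S * ∑ i ∈ S, (∏ j ∈ S.erase i, AffineMap.lineMap (fun _ => s) x (0 : ℝ) j ^ α) *
        ((x i - s) * α * s ^ (α - 1)) =
      (s ^ α) ^ (k - 1) * (α * s ^ (α - 1)) * (μ S * ∑ i ∈ S, (x i - s)) := fun S => by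
    by_cases h : μ S = 0
    · simp [h]
    · simp only [AffineMap.lineMap_apply_zero, prod_const, mul_sum]
      refine sum_congr rfl fun i hi => ?_
      rw [card_erase_of_mem hi, hμk S h]
      ring
  rw [sum_congr rfl fun S _ => hterm S, ← mul_sum, sum_mul_sum_eq_natCast_mul_sum_down1 hμk]
  ring

theorem genPoly_rpow_le_of_concaveOn (hμ0 : ∀ S, 0 ≤ μ S)
    (hμk : ∀ S, μ S ≠ 0 → S.card = k) (hμ1 : ∑ S, μ S = 1) (hk : k ≠ 0) {α : ℝ}
    (hFLC : ConcaveOn ℝ {z : Fin n → ℝ | ∀ i, 0 < z i}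
      (fun z => Real.log (genPoly μ (fun i => z i ^ α))))
    {x : Fin n → ℝ} (hx : ∀ i, 0 < x i) :
    genPoly μ (fun i => x i ^ α) ≤ (∑ i, down1 k μ i * x i) ^ (α * k) := by
  set s := ∑ i, down1 k μ i * x i with hs_def
  have hs : 0 < s := by
    obtain ⟨i, -, hi⟩ := exists_ne_zero_of_sum_ne_zero
      ((sum_down1 hμk hμ1 hk).symm ▸ one_ne_zero : ∑ i, down1 k μ i ≠ 0)
    exact sum_pos' (fun j _ => mul_nonneg (down1_nonneg hμ0 j) (hx j).le)
      ⟨i, mem_univ i, mul_pos ((down1_nonneg hμ0 i).lt_of_ne' hi) (hx i)⟩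
  have hcrit : ∑ i, down1 k μ i * (x i - s) = 0 := by
    simp only [mul_sub, sum_sub_distrib, ← sum_mul, sum_down1 hμk hμ1 hk, one_mul, ← hs_def,
      sub_self]
  have hd := (hasDerivAt_genPoly_rpow_lineMap_const hμk (α := α) hs x).log
    (by simp only [AffineMap.lineMap_apply_zero, genPoly_const hμk hμ1]; positivity)
  rw [hcrit, mul_zero, zero_div] at hd
  have hle := hFLC.le_add_of_hasDerivAt_lineMap (fun _ => hs) hx hd
  rw [add_zero, genPoly_const hμk hμ1, ← Real.rpow_natCast, ← Real.rpow_mul hs.le] at hle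
  exact (Real.log_le_log_iff (genPoly_pos hμ0 hμ1 fun i => Real.rpow_pos_of_pos (hx i) α)
    (by positivity)).mp hle

end GenPoly

open Filter Topology in
theorem stmt_0_general (n k : ℕ) (α : ℝ) (hα0 : 0 < α)
    (μ : Finset (Fin n) → ℝ)
    (hμ0 : ∀ S, 0 ≤ μ S)
    (hμk : ∀ S, μ S ≠ 0 → S.card = k)
    (hμ1 : ∑ S : Finset (Fin n), μ S = 1)
    (hFLC : ConcaveOn ℝ {z : Fin n → ℝ | ∀ i, 0 < z i}
      (fun z => Real.log (genPoly μ (fun i => z i ^ α)))) :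
    ∀ z : Fin n → ℝ, (∀ i, 0 ≤ z i) →
      genPoly μ z ≤ (∑ i : Fin n, down1 k μ i * z i ^ (1 / α)) ^ (α * (k : ℝ)) := by
  intro z hz
  rcases eq_or_ne k 0 with rfl | hk
  · simp [genPoly_eq_one_of_card_eq_zero hμk hμ1]
  set R : (Fin n → ℝ) → ℝ := fun y => (∑ i, down1 k μ i * y i ^ (1 / α)) ^ (α * k)
  have hR : Continuous R :=
    (continuous_finsetSum _ fun i _ => continuous_const.mul
      ((Real.continuous_rpow_const (by positivity)).comp (continuous_apply i))).rpow_const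
      fun _ => Or.inr (by positivity)
  have hpos : ∀ y, (∀ i, 0 < y i) → genPoly μ y ≤ R y := fun y hy => by
    have h := genPoly_rpow_le_of_concaveOn hμ0 hμk hμ1 hk hFLC
      (x := fun i => y i ^ (1 / α)) fun i => Real.rpow_pos_of_pos (hy i) _
    simpa only [R, one_div, Real.rpow_inv_rpow (hy _).le hα0.ne'] using h
  have hlim : Tendsto (fun ε : ℝ => fun i => z i + ε) (𝓝[>] 0) (𝓝 z) :=
    ((by fun_prop : Continuous fun ε : ℝ => fun i => z i + ε).tendsto' 0 z (by simp)).mono_left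
      nhdsWithin_le_nhds
  exact le_of_tendsto_of_tendsto ((continuous_genPoly μ).tendsto z |>.comp hlim)
    (hR.tendsto z |>.comp hlim)
    (eventually_nhdsWithin_of_forall fun ε hε => hpos _ fun i => by
      linarith [hz i, Set.mem_Ioi.mp hε])

theorem stmt_0 (n k : ℕ) (α : ℝ) (hα0 : 0 < α) (hα1 : α ≤ 1)
    (μ : Finset (Fin n) → ℝ)
    (hμ0 : ∀ S, 0 ≤ μ S)
    (hμk : ∀ S, μ S ≠ 0 → S.card = k)
    (hμ1 : ∑ S : Finset (Fin n), μ S = 1)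
    (hFLC : ConcaveOn ℝ {z : Fin n → ℝ | ∀ i, 0 < z i}
      (fun z => Real.log (genPoly μ (fun i => z i ^ α)))) :
    ∀ z : Fin n → ℝ, (∀ i, 0 ≤ z i) →
      genPoly μ z ≤ (∑ i : Fin n, down1 k μ i * z i ^ (1 / α)) ^ (α * (k : ℝ)) :=
  stmt_0_general n k α hα0 μ hμ0 hμk hμ1 hFLC
end

section
/- Let r ∈ ℕ_{≥1}, let α = 1/r, and let μ be an α-fractionally log-concave probability distribution on the k-element subsets of [n]. Let ℓ be an integer with 0 ≤ ℓ ≤ k − r, and set κ = C(k−ℓ, r) / C(k, r), the ratio of binomial coefficients. Then for every probability distribution ν on the k-element subsets of [n] with supp(ν) ⊆ supp(μ), D(ν D_{k→ℓ} ‖ μ D_{k→ℓ}) ≤ (1−κ)·D(ν ‖ μ). -/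
open Finset

/-- The `k → ℓ` down operator: `(ν D_{k→ℓ})(T) = ∑_{S ⊇ T} ν(S) / C(k,ℓ)` for `|T| = ℓ`. -/
noncomputable def downTo {n : ℕ} (k l : ℕ) (ν : Finset (Fin n) → ℝ)
    (T : Finset (Fin n)) : ℝ :=
  if T.card = l then
    (∑ S ∈ Finset.univ.filter (fun S => T ⊆ S), ν S) / (k.choose l : ℝ)
  else 0

/-- KL divergence `D(ν ‖ μ) = ∑_x ν(x) log (ν(x)/μ(x))` on a finite type. -/
noncomputable def KLdiv {X : Type*} [Fintype X] (ν μ : X → ℝ) : ℝ :=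
  ∑ x : X, ν x * Real.log (ν x / μ x)

namespace EntCon

variable {n : ℕ}

/-- mass of element i: `∑_{S ∋ i} f S`. -/
noncomputable def mass1 (f : Finset (Fin n) → ℝ) (i : Fin n) : ℝ :=
  ∑ S ∈ Finset.univ.filter (fun S => i ∈ S), f S

/-- mass of supersets of T. -/
noncomputable def supMass (f : Finset (Fin n) → ℝ) (T : Finset (Fin n)) : ℝ :=
  ∑ S ∈ Finset.univ.filter (fun S => T ⊆ S), f S

/-- conditional measure given i, on the ground set with i removed. -/
noncomputable def cmeas (f : Finset (Fin n) → ℝ) (i : Fin n) (S : Finset (Fin n)) : ℝ :=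
  if i ∈ S then 0 else f (insert i S) / mass1 f i

lemma mass1_nonneg (f : Finset (Fin n) → ℝ) (hf : ∀ S, 0 ≤ f S) (i : Fin n) :
    0 ≤ mass1 f i :=
  Finset.sum_nonneg fun S _ => hf S

lemma le_mass1 (f : Finset (Fin n) → ℝ) (hf : ∀ S, 0 ≤ f S) {i : Fin n}
    {S : Finset (Fin n)} (hi : i ∈ S) : f S ≤ mass1 f i :=
  Finset.single_le_sum (fun S _ => hf S) (Finset.mem_filter.mpr ⟨Finset.mem_univ _, hi⟩)

lemma exists_of_mass1_ne (f : Finset (Fin n) → ℝ) {i : Fin n}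
    (h : mass1 f i ≠ 0) : ∃ S, i ∈ S ∧ f S ≠ 0 := by
  obtain ⟨S, hS, hne⟩ := Finset.exists_ne_zero_of_sum_ne_zero h
  exact ⟨S, (Finset.mem_filter.mp hS).2, hne⟩

lemma mass_swap (f : Finset (Fin n) → ℝ) (g : Fin n → ℝ) :
    ∑ S : Finset (Fin n), f S * ∑ i ∈ S, g i = ∑ i, mass1 f i * g i := by
  have h1 : ∀ S : Finset (Fin n), f S * ∑ i ∈ S, g i
      = ∑ i : Fin n, if i ∈ S then f S * g i else 0 := by
    intro S
    rw [Finset.mul_sum, Finset.sum_ite_mem, Finset.univ_inter]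
  rw [Finset.sum_congr rfl fun S _ => h1 S, Finset.sum_comm]
  refine Finset.sum_congr rfl fun i _ => ?_
  rw [mass1, Finset.sum_mul, Finset.sum_filter]

lemma sum_mass1 (f : Finset (Fin n) → ℝ) (k : ℕ)
    (hfk : ∀ S, f S ≠ 0 → S.card = k) :
    ∑ i, mass1 f i = k * ∑ S : Finset (Fin n), f S := by
  have h := (mass_swap f (fun _ => (1:ℝ))).symm
  simp only [mul_one] at h
  rw [h]
  have h2 : ∀ S : Finset (Fin n), f S * ∑ _i ∈ S, (1:ℝ) = k * f S := by
    intro S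
    rcases eq_or_ne (f S) 0 with hS | hS
    · simp [hS]
    · rw [Finset.sum_const, nsmul_eq_mul, mul_one, hfk S hS]
      ring
  rw [Finset.sum_congr rfl fun S _ => h2 S, ← Finset.mul_sum]

lemma sum_insert_reindex (i : Fin n) (G : Finset (Fin n) → ℝ) :
    ∑ S ∈ Finset.univ.filter (fun S => i ∈ S), G S
      = ∑ T ∈ Finset.univ.filter (fun T => i ∉ T), G (insert i T) := by
  refine Finset.sum_nbij' (fun S => S.erase i) (fun T => insert i T) ?_ ?_ ?_ ?_ ?_
  · intro S hS
    simp only [Finset.mem_filter, Finset.mem_univ, true_and] at hS ⊢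
    exact Finset.notMem_erase i S
  · intro T hT
    simp only [Finset.mem_filter, Finset.mem_univ, true_and] at hT ⊢
    exact Finset.mem_insert_self i T
  · intro S hS
    simp only [Finset.mem_filter, Finset.mem_univ, true_and] at hS
    exact Finset.insert_erase hS
  · intro T hT
    simp only [Finset.mem_filter, Finset.mem_univ, true_and] at hT
    exact Finset.erase_insert hT
  · intro S hS
    simp only [Finset.mem_filter, Finset.mem_univ, true_and] at hS
    rw [Finset.insert_erase hS]

lemma sum_insert_comm (F : Fin n → Finset (Fin n) → ℝ) :
    ∑ i, ∑ T ∈ Finset.univ.filter (fun T => i ∉ T), F i (insert i T)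
      = ∑ S : Finset (Fin n), ∑ i ∈ S, F i S := by
  have h1 : ∀ i, ∑ T ∈ Finset.univ.filter (fun T => i ∉ T), F i (insert i T)
      = ∑ S ∈ Finset.univ.filter (fun S => i ∈ S), F i S :=
    fun i => (sum_insert_reindex i (F i)).symm
  rw [Finset.sum_congr rfl fun i _ => h1 i]
  have h2 : ∀ i, ∑ S ∈ Finset.univ.filter (fun S => i ∈ S), F i S
      = ∑ S : Finset (Fin n), if i ∈ S then F i S else 0 :=
    fun i => (Finset.sum_filter _ _)
  rw [Finset.sum_congr rfl fun i _ => h2 i, Finset.sum_comm]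
  refine Finset.sum_congr rfl fun S _ => ?_
  rw [Finset.sum_ite_mem, Finset.univ_inter]

lemma supMass_sum (A : Finset (Finset (Fin n))) (f : Finset (Fin n) → ℝ) :
    ∑ T ∈ A, supMass f T
      = ∑ S : Finset (Fin n), f S * ((A.filter (fun T => T ⊆ S)).card : ℝ) := by
  have h1 : ∀ T, supMass f T = ∑ S : Finset (Fin n), if T ⊆ S then f S else 0 :=
    fun T => Finset.sum_filter _ _
  rw [Finset.sum_congr rfl fun T _ => h1 T, Finset.sum_comm]
  refine Finset.sum_congr rfl fun S _ => ?_
  rw [← Finset.sum_filter, Finset.sum_const, nsmul_eq_mul, mul_comm]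

lemma count_card (S : Finset (Fin n)) (i : Fin n) (hi : i ∈ S) (m : ℕ) :
    ((Finset.univ.filter (fun T : Finset (Fin n) => T.card = m + 1 ∧ i ∈ T ∧ T ⊆ S))).card
      = (S.card - 1).choose m := by
  rw [← Finset.card_erase_of_mem hi, ← Finset.card_powersetCard m (S.erase i)]
  refine Finset.card_nbij' (fun T => T.erase i) (fun T' => insert i T') ?_ ?_ ?_ ?_
  · intro T hT
    simp only [Finset.mem_coe, Finset.mem_filter, Finset.mem_univ, true_and] at hT
    obtain ⟨hcard, hiT, hTS⟩ := hT
    rw [Finset.mem_coe, Finset.mem_powersetCard]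
    constructor
    · intro x hx
      rw [Finset.mem_erase] at hx ⊢
      exact ⟨hx.1, hTS hx.2⟩
    · rw [Finset.card_erase_of_mem hiT, hcard]
      simp
  · intro T' hT'
    rw [Finset.mem_coe, Finset.mem_powersetCard] at hT'
    obtain ⟨hsub, hcard⟩ := hT'
    have hiT' : i ∉ T' := fun h => (Finset.mem_erase.mp (hsub h)).1 rfl
    simp only [Finset.mem_coe, Finset.mem_filter, Finset.mem_univ, true_and]
    refine ⟨?_, Finset.mem_insert_self i T', ?_⟩
    · rw [Finset.card_insert_of_notMem hiT', hcard]
    · intro x hx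
      rcases Finset.mem_insert.mp hx with h | h
      · rw [h]; exact hi
      · exact (Finset.erase_subset i S) (hsub h)
  · intro T hT
    simp only [Finset.mem_coe, Finset.mem_filter, Finset.mem_univ, true_and] at hT
    exact Finset.insert_erase hT.2.1
  · intro T' hT'
    rw [Finset.mem_coe, Finset.mem_powersetCard] at hT'
    have hiT' : i ∉ T' := fun h => (Finset.mem_erase.mp (hT'.1 h)).1 rfl
    exact Finset.erase_insert hiT'


lemma swapA (A : Finset (Finset (Fin n))) (q : Finset (Fin n) → ℝ) (c : Fin n → ℝ) :
    ∑ T ∈ A, q T * ∑ i ∈ T, c i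
      = ∑ i, (∑ T ∈ A.filter (fun T => i ∈ T), q T) * c i := by
  have h1 : ∀ T ∈ A, q T * ∑ i ∈ T, c i
      = ∑ i : Fin n, if i ∈ T then q T * c i else 0 := by
    intro T _
    rw [Finset.mul_sum, Finset.sum_ite_mem, Finset.univ_inter]
  rw [Finset.sum_congr rfl h1, Finset.sum_comm]
  refine Finset.sum_congr rfl fun i _ => ?_
  rw [Finset.sum_mul, Finset.sum_filter]

lemma supMass_cmeas (f : Finset (Fin n) → ℝ) (i : Fin n) (T : Finset (Fin n)) :
    supMass (cmeas f i) T
      = if i ∈ T then 0 else supMass f (insert i T) / mass1 f i := by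
  rcases Finset.decidableMem i T with hiT | hiT
  · -- i ∉ T
    rw [if_neg hiT, supMass]
    rw [← Finset.sum_filter_add_sum_filter_not (Finset.univ.filter (fun S => T ⊆ S))
      (fun S => i ∉ S)]
    have hz : ∑ S ∈ (Finset.univ.filter (fun S => T ⊆ S)).filter (fun S => ¬ i ∉ S),
        cmeas f i S = 0 := by
      refine Finset.sum_eq_zero fun S hS => ?_
      have := (Finset.mem_filter.mp hS).2
      rw [cmeas, if_pos (not_not.mp this)]
    rw [hz, add_zero]
    have hval : ∀ S ∈ (Finset.univ.filter (fun S => T ⊆ S)).filter (fun S => i ∉ S),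
        cmeas f i S = f (insert i S) / mass1 f i := by
      intro S hS
      rw [cmeas, if_neg (Finset.mem_filter.mp hS).2]
    rw [Finset.sum_congr rfl hval]
    rw [supMass, ← Finset.sum_div]
    congr 1
    refine Finset.sum_nbij' (fun S => insert i S) (fun S => S.erase i) ?_ ?_ ?_ ?_ ?_
    · intro S hS
      rw [Finset.mem_filter] at hS
      obtain ⟨hS1, hS2⟩ := hS
      rw [Finset.mem_filter] at hS1
      simp only [Finset.mem_filter, Finset.mem_univ, true_and]
      exact Finset.insert_subset_insert i hS1.2
    · intro S hS
      simp only [Finset.mem_filter, Finset.mem_univ, true_and] at hS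
      have hiS : i ∈ S := hS (Finset.mem_insert_self i T)
      rw [Finset.mem_filter, Finset.mem_filter]
      refine ⟨⟨Finset.mem_univ _, ?_⟩, Finset.notMem_erase i S⟩
      rw [Finset.subset_erase]
      exact ⟨(Finset.insert_subset_iff.mp hS).2, hiT⟩
    · intro S hS
      rw [Finset.mem_filter] at hS
      exact Finset.erase_insert hS.2
    · intro S hS
      simp only [Finset.mem_filter, Finset.mem_univ, true_and] at hS
      exact Finset.insert_erase (hS (Finset.mem_insert_self i T))
    · intro S hS
      rfl
  · rw [if_pos hiT, supMass]
    refine Finset.sum_eq_zero fun S hS => ?_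
    have hsub := (Finset.mem_filter.mp hS).2
    rw [cmeas, if_pos (hsub hiT)]

lemma klNonneg {X : Type*} [Fintype X] (ν μ : X → ℝ)
    (hν0 : ∀ x, 0 ≤ ν x) (hμ0 : ∀ x, 0 ≤ μ x)
    (hν1 : ∑ x, ν x = 1) (hμ1 : ∑ x, μ x ≤ 1)
    (hac : ∀ x, μ x = 0 → ν x = 0) : 0 ≤ KLdiv ν μ := by
  have key : ∀ x, ν x - μ x ≤ ν x * Real.log (ν x / μ x) := by
    intro x
    rcases eq_or_ne (ν x) 0 with h | h
    · simp only [h, zero_mul, zero_sub, neg_nonpos]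
      exact hμ0 x
    · have hνx : 0 < ν x := (hν0 x).lt_of_ne' h
      have hμx : 0 < μ x := by
        rcases (hμ0 x).eq_or_lt with h0 | h0
        · exact absurd (hac x h0.symm) h
        · exact h0
      have hlog : Real.log (μ x / ν x) ≤ μ x / ν x - 1 :=
        Real.log_le_sub_one_of_pos (by positivity)
      have hinv : Real.log (ν x / μ x) = - Real.log (μ x / ν x) := by
        rw [← Real.log_inv, inv_div]
      have hdiv : ν x * (μ x / ν x) = μ x := by field_simp
      rw [hinv]
      nlinarith
  have h1 : ∑ x, (ν x - μ x) ≤ KLdiv ν μ := Finset.sum_le_sum fun x _ => key x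
  rw [Finset.sum_sub_distrib, hν1] at h1
  linarith

lemma gibbs (k : ℕ) (μ ν : Finset (Fin n) → ℝ)
    (hμ0 : ∀ S, 0 ≤ μ S) (hμ1 : ∑ S : Finset (Fin n), μ S = 1)
    (hν0 : ∀ S, 0 ≤ ν S) (hν1 : ∑ S : Finset (Fin n), ν S = 1)
    (hac : ∀ S, μ S = 0 → ν S = 0) (w : Finset (Fin n) → ℝ) (hw : ∀ S, 0 < w S) :
    ∑ S : Finset (Fin n), ν S * Real.log (w S)
      - Real.log (∑ S : Finset (Fin n), μ S * w S) ≤ KLdiv ν μ := by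
  set G := ∑ S : Finset (Fin n), μ S * w S with hG
  have hGpos : 0 < G := by
    obtain ⟨S0, hS0⟩ : ∃ S, μ S ≠ 0 := by
      by_contra hall
      push_neg at hall
      rw [Finset.sum_congr rfl fun S _ => hall S] at hμ1
      simp at hμ1
    refine Finset.sum_pos' (fun S _ => mul_nonneg (hμ0 S) (hw S).le)
      ⟨S0, Finset.mem_univ _, mul_pos ((hμ0 S0).lt_of_ne' hS0) (hw S0)⟩
  set μ' := fun S => μ S * w S / G with hμ'
  have hμ'0 : ∀ S, 0 ≤ μ' S := fun S => div_nonneg (mul_nonneg (hμ0 S) (hw S).le) hGpos.le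
  have hμ'1 : ∑ S : Finset (Fin n), μ' S = 1 := by
    rw [hμ']
    rw [← Finset.sum_div]
    exact div_self hGpos.ne'
  have hac' : ∀ S, μ' S = 0 → ν S = 0 := by
    intro S h
    apply hac
    rcases div_eq_zero_iff.mp h with h2 | h2
    · rcases mul_eq_zero.mp h2 with h3 | h3
      · exact h3
      · exact absurd h3 (hw S).ne'
    · exact absurd h2 hGpos.ne'
  have h0 : 0 ≤ KLdiv ν μ' := klNonneg ν μ' hν0 hμ'0 hν1 hμ'1.le hac'
  have expand : KLdiv ν μ' = KLdiv ν μ - ∑ S : Finset (Fin n), ν S * Real.log (w S)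
      + Real.log G := by
    have hterm : ∀ S, ν S * Real.log (ν S / μ' S)
        = ν S * Real.log (ν S / μ S) - ν S * Real.log (w S) + ν S * Real.log G := by
      intro S
      rcases eq_or_ne (ν S) 0 with h | h
      · simp [h]
      · have hνS : 0 < ν S := (hν0 S).lt_of_ne' h
        have hμS : 0 < μ S := by
          rcases (hμ0 S).eq_or_lt with h0' | h0'
          · exact absurd (hac S h0'.symm) h
          · exact h0'
        have harg : ν S / μ' S = (ν S / μ S) / w S * G := by
          rw [hμ']
          field_simp
        rw [harg, Real.log_mul (div_ne_zero (div_ne_zero hνS.ne' hμS.ne') (hw S).ne') hGpos.ne',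
          Real.log_div (div_ne_zero hνS.ne' hμS.ne') (hw S).ne']
        ring
    unfold KLdiv
    rw [Finset.sum_congr rfl fun S _ => hterm S, Finset.sum_add_distrib,
      Finset.sum_sub_distrib, ← Finset.sum_mul, hν1, one_mul]
  rw [expand] at h0
  linarith

set_option maxHeartbeats 1000000 in
lemma tangent (k r : ℕ) (hr : 1 ≤ r) (hk : 1 ≤ k) (μ : Finset (Fin n) → ℝ)
    (hμ0 : ∀ S, 0 ≤ μ S) (hμk : ∀ S, μ S ≠ 0 → S.card = k)
    (hμ1 : ∑ S : Finset (Fin n), μ S = 1)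
    (hFLC : ConcaveOn ℝ {z : Fin n → ℝ | ∀ i, 0 < z i}
      (fun z => Real.log (genPoly μ (fun i => z i ^ (1 / (r : ℝ))))))
    (z : Fin n → ℝ) (hz : ∀ i, 0 < z i) :
    Real.log (genPoly μ (fun i => z i ^ (1 / (r : ℝ))))
      ≤ (k : ℝ) * (1 / (r : ℝ)) * Real.log ((∑ i, mass1 μ i * z i) / k) := by
  have hrR : (0:ℝ) < r := by exact_mod_cast hr
  have hkR : (0:ℝ) < k := by exact_mod_cast hk
  set α : ℝ := 1 / (r : ℝ) with hαdef
  have hα : 0 < α := by positivity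
  set c : ℝ := (∑ i, mass1 μ i * z i) / k with hc
  have hPnn : ∀ i, 0 ≤ mass1 μ i := fun i => mass1_nonneg μ hμ0 i
  have hsumP : ∑ i, mass1 μ i = k := by
    rw [sum_mass1 μ k hμk, hμ1, mul_one]
  have hcpos : 0 < c := by
    apply div_pos ?_ hkR
    obtain ⟨i0, hi0mem, hi0⟩ : ∃ i ∈ Finset.univ, 0 < mass1 μ i := by
      by_contra hcon
      push_neg at hcon
      have hle : ∑ i, mass1 μ i ≤ 0 :=
        Finset.sum_nonpos fun i hi => (hcon i hi)
      rw [hsumP] at hle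
      linarith
    exact Finset.sum_pos' (fun i _ => mul_nonneg (hPnn i) (hz i).le)
      ⟨i0, Finset.mem_univ _, mul_pos hi0 (hz i0)⟩
  set v : Fin n → ℝ := fun i => z i - c with hv
  have hsumPv : ∑ i, mass1 μ i * v i = 0 := by
    have : ∀ i, mass1 μ i * v i = mass1 μ i * z i - mass1 μ i * c := by
      intro i; rw [hv]; ring
    rw [Finset.sum_congr rfl fun i _ => this i, Finset.sum_sub_distrib,
      ← Finset.sum_mul, hsumP, hc]
    field_simp
    ring
  set ψ : ℝ → ℝ := fun t => Real.log (genPoly μ (fun i => (c + t * v i) ^ α)) with hψ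
  -- positivity of the path
  have hpath : ∀ t ∈ Set.Icc (0:ℝ) 1, ∀ i, 0 < c + t * v i := by
    intro t ht i
    have : c + t * v i = (1 - t) * c + t * z i := by rw [hv]; ring
    rw [this]
    rcases eq_or_lt_of_le ht.1 with h0 | h0
    · rw [← h0]; simpa using hcpos
    · exact add_pos_of_nonneg_of_pos
        (mul_nonneg (by linarith [ht.2]) hcpos.le) (mul_pos h0 (hz i))
  -- genPoly positivity along path at 0
  obtain ⟨S0, hS0⟩ : ∃ S, μ S ≠ 0 := by
    by_contra hall
    push_neg at hall
    rw [Finset.sum_congr rfl fun S _ => hall S] at hμ1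
    simp at hμ1
  have hGpos : ∀ (y : Fin n → ℝ), (∀ i, 0 < y i) → 0 < genPoly μ (fun i => (y i) ^ α) := by
    intro y hy
    refine Finset.sum_pos' (fun S _ => mul_nonneg (hμ0 S)
      (Finset.prod_nonneg fun i _ => (Real.rpow_pos_of_pos (hy i) α).le)) ?_
    exact ⟨S0, Finset.mem_univ _, mul_pos ((hμ0 S0).lt_of_ne' hS0)
      (Finset.prod_pos fun i _ => Real.rpow_pos_of_pos (hy i) α)⟩
  -- derivative of G at 0 is 0
  have hGd : HasDerivAt (fun t => genPoly μ (fun i => (c + t * v i) ^ α)) 0 0 := by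
    have hterm : ∀ S : Finset (Fin n),
        HasDerivAt (fun t => μ S * ∏ i ∈ S, (c + t * v i) ^ α)
          (μ S * (Real.exp (∑ i ∈ S, Real.log c * α) * ((∑ i ∈ S, v i / c) * α))) 0 := by
      intro S
      -- eventual positivity
      have hev : ∀ᶠ t in nhds (0:ℝ), ∀ i ∈ S, 0 < c + t * v i := by
        set B : ℝ := ∑ j, |v j| with hB
        have hBnn : 0 ≤ B := Finset.sum_nonneg fun j _ => abs_nonneg _
        have hball : Metric.ball (0:ℝ) (c / (B + 1)) ∈ nhds (0:ℝ) :=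
          Metric.ball_mem_nhds _ (by positivity)
        filter_upwards [hball] with t ht i hi
        rw [Metric.mem_ball, Real.dist_eq, sub_zero] at ht
        have h1 : |v i| ≤ B := Finset.single_le_sum (fun j _ => abs_nonneg (v j))
          (Finset.mem_univ i)
        have h2 : |t * v i| < c := by
          rw [abs_mul]
          calc |t| * |v i| ≤ |t| * B := by
                exact mul_le_mul_of_nonneg_left h1 (abs_nonneg t)
            _ < c := by
                have ht' : |t| * (B + 1) < c :=
                  (lt_div_iff₀ (by positivity : (0:ℝ) < B + 1)).mp ht
                nlinarith [abs_nonneg t]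
        nlinarith [neg_abs_le (t * v i), abs_nonneg (t * v i)]
      have hEq : (fun t => ∏ i ∈ S, (c + t * v i) ^ α)
          =ᶠ[nhds (0:ℝ)] (fun t => Real.exp (∑ i ∈ S, Real.log (c + t * v i) * α)) := by
        filter_upwards [hev] with t ht
        rw [Real.exp_sum]
        exact Finset.prod_congr rfl fun i hi => Real.rpow_def_of_pos (ht i hi) α
      have hsumd : HasDerivAt (fun t => ∑ i ∈ S, Real.log (c + t * v i) * α)
          (∑ i ∈ S, v i / c * α) 0 := by
        apply HasDerivAt.fun_sum
        intro i hi
        have h1 : HasDerivAt (fun t : ℝ => c + t * v i) (v i) 0 := by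
          simpa using ((hasDerivAt_id (0:ℝ)).mul_const (v i)).const_add c
        have h2 : HasDerivAt (fun t : ℝ => Real.log (c + t * v i)) (v i / (c + 0 * v i)) 0 :=
          h1.log (by simpa using hcpos.ne')
        simpa using h2.mul_const α
      have hexp := hsumd.exp
      have hexp' : HasDerivAt (fun t => Real.exp (∑ i ∈ S, Real.log (c + t * v i) * α))
          (Real.exp (∑ i ∈ S, Real.log c * α) * ((∑ i ∈ S, v i / c) * α)) 0 := by
        convert hexp using 1
        simp [Finset.sum_mul]
      exact ((hexp'.congr_of_eventuallyEq hEq).const_mul (μ S))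
    have htot := HasDerivAt.fun_sum (fun S (_ : S ∈ Finset.univ) => hterm S)
    have hval : ∑ S : Finset (Fin n),
        μ S * (Real.exp (∑ i ∈ S, Real.log c * α) * ((∑ i ∈ S, v i / c) * α)) = 0 := by
      have hterm2 : ∀ S : Finset (Fin n),
          μ S * (Real.exp (∑ i ∈ S, Real.log c * α) * ((∑ i ∈ S, v i / c) * α))
            = (Real.exp ((k : ℝ) * (Real.log c * α)) * α / c) * (μ S * ∑ i ∈ S, v i) := by
        intro S
        rcases eq_or_ne (μ S) 0 with h | h
        · simp [h]
        · rw [Finset.sum_const, ← Finset.sum_div, hμk S h, nsmul_eq_mul]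
          ring
      rw [Finset.sum_congr rfl fun S _ => hterm2 S, ← Finset.mul_sum, mass_swap μ v,
        hsumPv, mul_zero]
    rw [hval] at htot
    exact htot
  -- value of genPoly at t = 0
  have hG0 : genPoly μ (fun i => (c + 0 * v i) ^ α) = (c ^ α) ^ k := by
    unfold genPoly
    have : ∀ S : Finset (Fin n), μ S * ∏ i ∈ S, (c + 0 * v i) ^ α = μ S * (c ^ α) ^ k := by
      intro S
      rcases eq_or_ne (μ S) 0 with h | h
      · simp [h]
      · have hprod : ∀ i ∈ S, (c + 0 * v i) ^ α = c ^ α := fun i _ => by norm_num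
        rw [Finset.prod_congr rfl hprod, Finset.prod_const, hμk S h]
    rw [Finset.sum_congr rfl fun S _ => this S, ← Finset.sum_mul, hμ1, one_mul]
  have hψd : HasDerivAt ψ 0 0 := by
    have := hGd.log (by rw [hG0]; positivity)
    simpa using this
  have hψ0 : ψ 0 = (k:ℝ) * (α * Real.log c) := by
    show Real.log (genPoly μ fun i => (c + 0 * v i) ^ α) = _
    rw [hG0, Real.log_pow, Real.log_rpow hcpos]
  -- concavity slope bound
  have hconc : ∀ t : ℝ, t ∈ Set.Ioc (0:ℝ) 1 → ψ 1 - ψ 0 ≤ (ψ t - ψ 0) / t := by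
    intro t ht
    have hx : (fun _ : Fin n => c) ∈ {z : Fin n → ℝ | ∀ i, 0 < z i} := fun i => hcpos
    have hy : z ∈ {z : Fin n → ℝ | ∀ i, 0 < z i} := hz
    have h := hFLC.2 hx hy (by linarith [ht.2] : (0:ℝ) ≤ 1 - t) ht.1.le (by ring)
    simp only [smul_eq_mul] at h
    have hpt : ((1 - t) • (fun _ : Fin n => c) + t • z) = fun i => c + t * v i := by
      funext i
      simp only [Pi.add_apply, Pi.smul_apply, smul_eq_mul, hv]
      ring
    rw [hpt] at h
    have he1 : Real.log (genPoly μ fun i => (fun _ : Fin n => c) i ^ α) = ψ 0 := by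
      show _ = Real.log (genPoly μ fun i => (c + 0 * v i) ^ α)
      congr 2
      funext i
      simp
    have he2 : Real.log (genPoly μ fun i => z i ^ α) = ψ 1 := by
      show _ = Real.log (genPoly μ fun i => (c + 1 * v i) ^ α)
      congr 2
      funext i
      congr 1
      simp only [hv]
      ring
    rw [he1, he2] at h
    rw [le_div_iff₀ ht.1]
    nlinarith
  -- slopes tend to derivative 0
  have htend : Filter.Tendsto (fun t => (ψ t - ψ 0) / t)
      (nhdsWithin 0 (Set.Ioi (0:ℝ))) (nhds 0) := by
    have h1 := (hψd.hasDerivWithinAt (s := Set.Ioi (0:ℝ)))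
    rw [hasDerivWithinAt_iff_tendsto_slope] at h1
    have h2 : Set.Ioi (0:ℝ) \ {0} = Set.Ioi 0 := by
      ext x
      simp only [Set.mem_diff, Set.mem_Ioi, Set.mem_singleton_iff]
      constructor
      · exact fun h => h.1
      · exact fun h => ⟨h, ne_of_gt h⟩
    rw [h2] at h1
    refine h1.congr fun t => ?_
    rw [slope_def_field, sub_zero]
  have hfinal : ψ 1 - ψ 0 ≤ 0 := by
    refine ge_of_tendsto htend ?_
    filter_upwards [Ioc_mem_nhdsGT_of_mem (Set.mem_Ico.mpr ⟨le_refl (0:ℝ), zero_lt_one⟩)]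
      with t ht
    exact hconc t ht
  have he2 : Real.log (genPoly μ fun i => z i ^ α) = ψ 1 := by
    show _ = Real.log (genPoly μ fun i => (c + 1 * v i) ^ α)
    congr 2
    funext i
    congr 1
    simp only [hv]
    ring
  rw [he2]
  rw [hψ0] at hfinal
  linarith

set_option maxHeartbeats 1000000 in
lemma step1 (k r : ℕ) (hr : 1 ≤ r) (hk : 1 ≤ k) (μ ν : Finset (Fin n) → ℝ)
    (hμ0 : ∀ S, 0 ≤ μ S) (hμk : ∀ S, μ S ≠ 0 → S.card = k)
    (hμ1 : ∑ S : Finset (Fin n), μ S = 1)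
    (hFLC : ConcaveOn ℝ {z : Fin n → ℝ | ∀ i, 0 < z i}
      (fun z => Real.log (genPoly μ (fun i => z i ^ (1 / (r : ℝ))))))
    (hν0 : ∀ S, 0 ≤ ν S) (hνk : ∀ S, ν S ≠ 0 → S.card = k)
    (hν1 : ∑ S : Finset (Fin n), ν S = 1) (hac : ∀ S, μ S = 0 → ν S = 0) :
    ∑ i, mass1 ν i * Real.log (mass1 ν i / mass1 μ i) ≤ (r : ℝ) * KLdiv ν μ := by
  have hrR : (0:ℝ) < r := by exact_mod_cast hr
  have hkR : (0:ℝ) < k := by exact_mod_cast hk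
  set α : ℝ := 1 / (r : ℝ) with hαdef
  have hα : 0 < α := by positivity
  have hνP : ∀ i, mass1 ν i ≠ 0 → 0 < mass1 μ i := by
    intro i hNi
    obtain ⟨S, hiS, hS⟩ := exists_of_mass1_ne ν hNi
    have hμS : μ S ≠ 0 := fun h => hS (hac S h)
    exact lt_of_lt_of_le ((hμ0 S).lt_of_ne' hμS) (le_mass1 μ hμ0 hiS)
  refine le_of_forall_pos_le_add ?_
  intro ε hε
  set M : ℝ := ∑ i ∈ Finset.univ.filter (fun i => mass1 ν i = 0), mass1 μ i with hM
  have hM0 : 0 ≤ M :=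
    Finset.sum_nonneg fun i _ => mass1_nonneg μ hμ0 i
  set ε' : ℝ := ε / (M + 1) with hε'
  have hε'pos : 0 < ε' := by positivity
  set z : Fin n → ℝ := fun i => if mass1 ν i = 0 then ε' else mass1 ν i / mass1 μ i
    with hzdef
  have hzpos : ∀ i, 0 < z i := by
    intro i
    rw [hzdef]
    dsimp only
    split
    · exact hε'pos
    · rename_i hne
      exact div_pos ((mass1_nonneg ν hν0 i).lt_of_ne' hne) (hνP i hne)
  have hw : ∀ S : Finset (Fin n), 0 < ∏ i ∈ S, z i ^ α :=
    fun S => Finset.prod_pos fun i _ => Real.rpow_pos_of_pos (hzpos i) α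
  have hgibbs := gibbs k μ ν hμ0 hμ1 hν0 hν1 hac (fun S => ∏ i ∈ S, z i ^ α) hw
  have htan := tangent k r hr hk μ hμ0 hμk hμ1 hFLC z hzpos
  -- identify genPoly with the sum in gibbs
  have hgen : genPoly μ (fun i => z i ^ α) = ∑ S : Finset (Fin n), μ S * ∏ i ∈ S, z i ^ α :=
    rfl
  -- LHS of gibbs
  have hlhs : ∑ S : Finset (Fin n), ν S * Real.log (∏ i ∈ S, z i ^ α)
      = α * ∑ i, mass1 ν i * Real.log (z i) := by
    have h1 : ∀ S : Finset (Fin n), Real.log (∏ i ∈ S, z i ^ α)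
        = ∑ i ∈ S, α * Real.log (z i) := by
      intro S
      rw [Real.log_prod (fun i _ => (Real.rpow_pos_of_pos (hzpos i) α).ne')]
      exact Finset.sum_congr rfl fun i _ => by rw [Real.log_rpow (hzpos i)]
    calc ∑ S : Finset (Fin n), ν S * Real.log (∏ i ∈ S, z i ^ α)
        = ∑ S : Finset (Fin n), ν S * ∑ i ∈ S, α * Real.log (z i) :=
          Finset.sum_congr rfl fun S _ => by rw [h1 S]
      _ = ∑ i, mass1 ν i * (α * Real.log (z i)) := mass_swap ν _
      _ = α * ∑ i, mass1 ν i * Real.log (z i) := by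
          rw [Finset.mul_sum]
          exact Finset.sum_congr rfl fun i _ => by ring
  -- value of ∑ P z
  have hsumN : ∑ i, mass1 ν i = k := by rw [sum_mass1 ν k hνk, hν1, mul_one]
  have hPz : ∑ i, mass1 μ i * z i = k + ε' * M := by
    rw [← Finset.sum_filter_add_sum_filter_not Finset.univ (fun i => mass1 ν i = 0)]
    have h1 : ∑ i ∈ Finset.univ.filter (fun i => mass1 ν i = 0), mass1 μ i * z i
        = ε' * M := by
      rw [hM, Finset.mul_sum]
      refine Finset.sum_congr rfl fun i hi => ?_
      have h0 := (Finset.mem_filter.mp hi).2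
      rw [hzdef]
      dsimp only
      rw [if_pos h0]
      ring
    have h2 : ∑ i ∈ Finset.univ.filter (fun i => ¬mass1 ν i = 0), mass1 μ i * z i
        = (k : ℝ) := by
      have h3 : ∀ i ∈ Finset.univ.filter (fun i => ¬mass1 ν i = 0),
          mass1 μ i * z i = mass1 ν i := by
        intro i hi
        have hne := (Finset.mem_filter.mp hi).2
        rw [hzdef]
        dsimp only
        rw [if_neg hne]
        rw [mul_div_cancel₀ _ (hνP i hne).ne']
      rw [Finset.sum_congr rfl h3]
      rw [← hsumN]
      exact Finset.sum_filter_ne_zero _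
    rw [h1, h2]
    ring
  -- log bound
  have hlogb : (k : ℝ) * Real.log ((k + ε' * M) / k) ≤ ε' * M := by
    have harg : 0 < (k + ε' * M) / k := by positivity
    have h1 : Real.log ((k + ε' * M) / k) ≤ (k + ε' * M) / k - 1 :=
      Real.log_le_sub_one_of_pos harg
    have h2 : (k:ℝ) * ((k + ε' * M) / k - 1) = ε' * M := by field_simp; ring
    nlinarith
  -- combine
  have hchain : α * ∑ i, mass1 ν i * Real.log (z i)
      ≤ KLdiv ν μ + (k:ℝ) * α * Real.log ((k + ε' * M) / k) := by
    have := hgibbs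
    rw [hlhs] at this
    rw [hgen] at htan
    rw [hPz] at htan
    linarith
  have hzlog : ∑ i, mass1 ν i * Real.log (mass1 ν i / mass1 μ i)
      = ∑ i, mass1 ν i * Real.log (z i) := by
    refine Finset.sum_congr rfl fun i _ => ?_
    rcases eq_or_ne (mass1 ν i) 0 with h | h
    · rw [h]; ring
    · rw [hzdef]; dsimp only; rw [if_neg h]
  rw [hzlog]
  -- multiply hchain by r
  have hrα : (r:ℝ) * α = 1 := by rw [hαdef]; field_simp
  have hε'M : ε' * M ≤ ε := by
    rw [hε']
    rw [div_mul_eq_mul_div, div_le_iff₀ (by positivity : (0:ℝ) < M + 1)]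
    nlinarith
  calc ∑ i, mass1 ν i * Real.log (z i)
      = (r:ℝ) * (α * ∑ i, mass1 ν i * Real.log (z i)) := by
        rw [← mul_assoc, hrα, one_mul]
    _ ≤ (r:ℝ) * (KLdiv ν μ + (k:ℝ) * α * Real.log ((k + ε' * M) / k)) := by
        apply mul_le_mul_of_nonneg_left hchain hrR.le
    _ = (r:ℝ) * KLdiv ν μ + ((r:ℝ) * α) * ((k:ℝ) * Real.log ((k + ε' * M) / k)) := by
        ring
    _ ≤ (r:ℝ) * KLdiv ν μ + ε := by
        rw [hrα, one_mul]
        have := hlogb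
        linarith

lemma identI (k : ℕ) (hk : 1 ≤ k) (μ ν : Finset (Fin n) → ℝ)
    (hμ0 : ∀ S, 0 ≤ μ S)
    (hν0 : ∀ S, 0 ≤ ν S) (hνk : ∀ S, ν S ≠ 0 → S.card = k)
    (hac : ∀ S, μ S = 0 → ν S = 0) :
    (k : ℝ) * KLdiv ν μ
      = ∑ i, mass1 ν i * Real.log (mass1 ν i / mass1 μ i)
        + ∑ i, mass1 ν i * KLdiv (cmeas ν i) (cmeas μ i) := by
  have hνP : ∀ i, mass1 ν i ≠ 0 → 0 < mass1 μ i := by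
    intro i hNi
    obtain ⟨S, hiS, hS⟩ := exists_of_mass1_ne ν hNi
    have hμS : μ S ≠ 0 := fun h => hS (hac S h)
    exact lt_of_lt_of_le ((hμ0 S).lt_of_ne' hμS) (le_mass1 μ hμ0 hiS)
  -- Step A: rewrite each conditional KL term
  have hA : ∀ i, mass1 ν i * KLdiv (cmeas ν i) (cmeas μ i)
      = ∑ T ∈ Finset.univ.filter (fun T => i ∉ T),
          ν (insert i T) * (Real.log (ν (insert i T) / μ (insert i T))
            - Real.log (mass1 ν i / mass1 μ i)) := by
    intro i
    have hsplit : KLdiv (cmeas ν i) (cmeas μ i)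
        = ∑ T ∈ Finset.univ.filter (fun T => i ∉ T),
            cmeas ν i T * Real.log (cmeas ν i T / cmeas μ i T) := by
      unfold KLdiv
      rw [← Finset.sum_filter_add_sum_filter_not Finset.univ (fun T => i ∉ T)]
      have hzero : ∑ T ∈ Finset.univ.filter (fun T => ¬ i ∉ T),
          cmeas ν i T * Real.log (cmeas ν i T / cmeas μ i T) = 0 := by
        refine Finset.sum_eq_zero fun T hT => ?_
        have hiT : i ∈ T := not_not.mp (Finset.mem_filter.mp hT).2
        rw [cmeas, if_pos hiT, zero_mul]
      rw [hzero, add_zero]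
    rw [hsplit, Finset.mul_sum]
    refine Finset.sum_congr rfl fun T hT => ?_
    have hiT : i ∉ T := (Finset.mem_filter.mp hT).2
    rw [cmeas, cmeas, if_neg hiT, if_neg hiT]
    rcases eq_or_ne (ν (insert i T)) 0 with h0 | h0
    · rw [h0]
      simp
    · have hNi : mass1 ν i ≠ 0 := by
        intro h
        have h1 : ν (insert i T) ≤ mass1 ν i := le_mass1 ν hν0 (Finset.mem_insert_self i T)
        have h2 : 0 ≤ ν (insert i T) := hν0 _
        rw [h] at h1
        exact h0 (le_antisymm h1 h2)
      have hNipos : 0 < mass1 ν i := (mass1_nonneg ν hν0 i).lt_of_ne' hNi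
      have hPipos : 0 < mass1 μ i := hνP i hNi
      have hνpos : 0 < ν (insert i T) := (hν0 _).lt_of_ne' h0
      have hμpos : 0 < μ (insert i T) := by
        have hne : μ (insert i T) ≠ 0 := fun h => h0 (hac _ h)
        exact (hμ0 _).lt_of_ne' hne
      have harg : ν (insert i T) / mass1 ν i / (μ (insert i T) / mass1 μ i)
          = (ν (insert i T) / μ (insert i T)) / (mass1 ν i / mass1 μ i) := by
        field_simp
      rw [harg, Real.log_div (div_ne_zero hνpos.ne' hμpos.ne')
        (div_ne_zero hNipos.ne' hPipos.ne')]
      field_simp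
  rw [Finset.sum_congr rfl fun i _ => hA i]
  rw [sum_insert_comm (fun i S => ν S * (Real.log (ν S / μ S)
    - Real.log (mass1 ν i / mass1 μ i)))]
  have hexp : ∀ S : Finset (Fin n), ∑ i ∈ S, ν S * (Real.log (ν S / μ S)
      - Real.log (mass1 ν i / mass1 μ i))
      = (k : ℝ) * (ν S * Real.log (ν S / μ S))
        - ν S * ∑ i ∈ S, Real.log (mass1 ν i / mass1 μ i) := by
    intro S
    rcases eq_or_ne (ν S) 0 with h0 | h0
    · rw [h0]
      simp
    · have hstep : ∀ i ∈ S, ν S * (Real.log (ν S / μ S) - Real.log (mass1 ν i / mass1 μ i))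
          = ν S * Real.log (ν S / μ S) - ν S * Real.log (mass1 ν i / mass1 μ i) :=
        fun i _ => by ring
      rw [Finset.sum_congr rfl hstep, Finset.sum_sub_distrib, Finset.sum_const, nsmul_eq_mul,
        hνk S h0, ← Finset.mul_sum]
  rw [Finset.sum_congr rfl fun S _ => hexp S, Finset.sum_sub_distrib]
  rw [← Finset.mul_sum]
  rw [mass_swap ν (fun i => Real.log (mass1 ν i / mass1 μ i))]
  unfold KLdiv
  ring

lemma identII (k m : ℕ) (hk : m + 1 ≤ k) (μ ν : Finset (Fin n) → ℝ)
    (hμ0 : ∀ S, 0 ≤ μ S) (hμk : ∀ S, μ S ≠ 0 → S.card = k)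
    (hν0 : ∀ S, 0 ≤ ν S) (hνk : ∀ S, ν S ≠ 0 → S.card = k)
    (hac : ∀ S, μ S = 0 → ν S = 0) :
    (k : ℝ) * KLdiv (downTo k (m + 1) ν) (downTo k (m + 1) μ)
      = ∑ i, mass1 ν i * Real.log (mass1 ν i / mass1 μ i)
        + ∑ i, mass1 ν i *
            KLdiv (downTo (k - 1) m (cmeas ν i)) (downTo (k - 1) m (cmeas μ i)) := by
  have hk1 : 1 ≤ k := le_trans (Nat.le_add_left 1 m) hk
  have hm : m ≤ k - 1 := by omega
  have hCk : (0:ℝ) < (k.choose (m+1) : ℝ) := by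
    exact_mod_cast Nat.choose_pos hk
  have hCk1 : (0:ℝ) < ((k-1).choose m : ℝ) := by
    exact_mod_cast Nat.choose_pos hm
  have hνP : ∀ i, mass1 ν i ≠ 0 → 0 < mass1 μ i := by
    intro i hNi
    obtain ⟨S, hiS, hS⟩ := exists_of_mass1_ne ν hNi
    have hμS : μ S ≠ 0 := fun h => hS (hac S h)
    exact lt_of_lt_of_le ((hμ0 S).lt_of_ne' hμS) (le_mass1 μ hμ0 hiS)
  have hQν0 : ∀ T, 0 ≤ supMass ν T := fun T => Finset.sum_nonneg fun S _ => hν0 S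
  have hQpos : ∀ T, supMass ν T ≠ 0 → 0 < supMass μ T := by
    intro T hT
    obtain ⟨S, hSmem, hS⟩ := Finset.exists_ne_zero_of_sum_ne_zero hT
    have hμS : μ S ≠ 0 := fun h => hS (hac S h)
    refine lt_of_lt_of_le ((hμ0 S).lt_of_ne' hμS) ?_
    exact Finset.single_le_sum (fun S' _ => hμ0 S') hSmem
  have hQmass : ∀ (i : Fin n) (T : Finset (Fin n)), i ∈ T → supMass ν T ≠ 0 →
      mass1 ν i ≠ 0 := by
    intro i T hiT hT
    obtain ⟨S, hSmem, hS⟩ := Finset.exists_ne_zero_of_sum_ne_zero hT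
    have hsub := (Finset.mem_filter.mp hSmem).2
    intro h0
    have h1 : ν S ≤ mass1 ν i := le_mass1 ν hν0 (hsub hiT)
    rw [h0] at h1
    exact hS (le_antisymm h1 (hν0 S))
  set LL : Finset (Fin n) → ℝ := fun T => Real.log (supMass ν T / supMass μ T) with hLL
  set cc : Fin n → ℝ := fun i => Real.log (mass1 ν i / mass1 μ i) with hcc
  -- Step A': expand the down-projected KL
  have hA : KLdiv (downTo k (m+1) ν) (downTo k (m+1) μ)
      = (k.choose (m+1) : ℝ)⁻¹ *
          ∑ T ∈ Finset.univ.filter (fun T : Finset (Fin n) => T.card = m+1),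
            supMass ν T * LL T := by
    unfold KLdiv
    rw [← Finset.sum_filter_add_sum_filter_not Finset.univ
      (fun T : Finset (Fin n) => T.card = m+1)]
    have hz : ∑ T ∈ Finset.univ.filter (fun T : Finset (Fin n) => ¬ T.card = m+1),
        downTo k (m+1) ν T * Real.log (downTo k (m+1) ν T / downTo k (m+1) μ T) = 0 := by
      refine Finset.sum_eq_zero fun T hT => ?_
      rw [downTo, if_neg (Finset.mem_filter.mp hT).2, zero_mul]
    rw [hz, add_zero, Finset.mul_sum]
    refine Finset.sum_congr rfl fun T hT => ?_
    have hcard := (Finset.mem_filter.mp hT).2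
    rw [downTo, downTo, if_pos hcard, if_pos hcard]
    have hr1 : (∑ S ∈ Finset.univ.filter (fun S => T ⊆ S), ν S) = supMass ν T := rfl
    have hr2 : (∑ S ∈ Finset.univ.filter (fun S => T ⊆ S), μ S) = supMass μ T := rfl
    rw [hr1, hr2]
    rcases eq_or_ne (supMass ν T) 0 with h0 | h0
    · rw [h0]
      simp
    · have hQμ : 0 < supMass μ T := hQpos T h0
      have harg : supMass ν T / (k.choose (m+1) : ℝ)
            / (supMass μ T / (k.choose (m+1) : ℝ))
          = supMass ν T / supMass μ T := by
        field_simp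
      rw [harg]
      simp only [hLL]
      ring
  -- Step B': expand each conditional down-projected KL
  have hB : ∀ i, mass1 ν i *
      KLdiv (downTo (k-1) m (cmeas ν i)) (downTo (k-1) m (cmeas μ i))
      = ((k-1).choose m : ℝ)⁻¹ *
          ∑ T ∈ Finset.univ.filter (fun T : Finset (Fin n) => i ∉ T ∧ T.card = m),
            supMass ν (insert i T) * (LL (insert i T) - cc i) := by
    intro i
    have hexpand : KLdiv (downTo (k-1) m (cmeas ν i)) (downTo (k-1) m (cmeas μ i))
        = ∑ T ∈ Finset.univ.filter (fun T : Finset (Fin n) => i ∉ T ∧ T.card = m),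
            downTo (k-1) m (cmeas ν i) T *
              Real.log (downTo (k-1) m (cmeas ν i) T / downTo (k-1) m (cmeas μ i) T) := by
      unfold KLdiv
      rw [← Finset.sum_filter_add_sum_filter_not Finset.univ
        (fun T : Finset (Fin n) => i ∉ T ∧ T.card = m)]
      have hz : ∑ T ∈ Finset.univ.filter
          (fun T : Finset (Fin n) => ¬ (i ∉ T ∧ T.card = m)),
          downTo (k-1) m (cmeas ν i) T *
            Real.log (downTo (k-1) m (cmeas ν i) T / downTo (k-1) m (cmeas μ i) T) = 0 := by
        refine Finset.sum_eq_zero fun T hT => ?_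
        have hcond := (Finset.mem_filter.mp hT).2
        rcases Decidable.em (T.card = m) with hcard | hcard
        · have hiT : i ∈ T := by
            by_contra hiT
            exact hcond ⟨hiT, hcard⟩
          have h0 : (∑ S ∈ Finset.univ.filter (fun S => T ⊆ S), cmeas ν i S) = 0 := by
            have h := supMass_cmeas ν i T
            rw [if_pos hiT] at h
            exact h
          rw [downTo, if_pos hcard, h0, zero_div, zero_mul]
        · rw [downTo, if_neg hcard, zero_mul]
      rw [hz, add_zero]
    rw [hexpand, Finset.mul_sum, Finset.mul_sum]
    refine Finset.sum_congr rfl fun T hT => ?_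
    obtain ⟨hiT, hcard⟩ := (Finset.mem_filter.mp hT).2
    rw [downTo, downTo, if_pos hcard, if_pos hcard]
    have hsν : (∑ S ∈ Finset.univ.filter (fun S => T ⊆ S), cmeas ν i S)
        = supMass ν (insert i T) / mass1 ν i := by
      have := supMass_cmeas ν i T
      rw [if_neg hiT] at this
      rw [← this, supMass]
    have hsμ : (∑ S ∈ Finset.univ.filter (fun S => T ⊆ S), cmeas μ i S)
        = supMass μ (insert i T) / mass1 μ i := by
      have := supMass_cmeas μ i T
      rw [if_neg hiT] at this
      rw [← this, supMass]
    rw [hsν, hsμ]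
    rcases eq_or_ne (supMass ν (insert i T)) 0 with h0 | h0
    · rw [h0]
      simp
    · have hNi : mass1 ν i ≠ 0 := hQmass i (insert i T) (Finset.mem_insert_self i T) h0
      have hNipos : 0 < mass1 ν i := (mass1_nonneg ν hν0 i).lt_of_ne' hNi
      have hPipos : 0 < mass1 μ i := hνP i hNi
      have hQνpos : 0 < supMass ν (insert i T) := (hQν0 _).lt_of_ne' h0
      have hQμpos : 0 < supMass μ (insert i T) := hQpos _ h0
      have harg : supMass ν (insert i T) / mass1 ν i / ((k-1).choose m : ℝ)
            / (supMass μ (insert i T) / mass1 μ i / ((k-1).choose m : ℝ))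
          = (supMass ν (insert i T) / supMass μ (insert i T))
            / (mass1 ν i / mass1 μ i) := by
        field_simp
      rw [harg, Real.log_div (div_ne_zero hQνpos.ne' hQμpos.ne')
        (div_ne_zero hNipos.ne' hPipos.ne')]
      simp only [hLL, hcc]
      field_simp
  -- sum the B' identities over i and reindex
  have hsum : ∑ i, mass1 ν i *
      KLdiv (downTo (k-1) m (cmeas ν i)) (downTo (k-1) m (cmeas μ i))
      = ((k-1).choose m : ℝ)⁻¹ *
          ((m+1 : ℝ) * (∑ T ∈ Finset.univ.filter
              (fun T : Finset (Fin n) => T.card = m+1), supMass ν T * LL T)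
            - ((k-1).choose m : ℝ) * ∑ i, mass1 ν i * cc i) := by
    rw [Finset.sum_congr rfl fun i _ => hB i, ← Finset.mul_sum]
    congr 1
    -- reindex using sum_insert_comm
    have hcomm := sum_insert_comm (fun i T =>
      if T.card = m + 1 then supMass ν T * (LL T - cc i) else 0)
    have hlhs : ∀ i, (∑ T ∈ Finset.univ.filter (fun T => i ∉ T),
        if (insert i T).card = m + 1 then supMass ν (insert i T) * (LL (insert i T) - cc i)
          else 0)
        = ∑ T ∈ Finset.univ.filter (fun T : Finset (Fin n) => i ∉ T ∧ T.card = m),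
            supMass ν (insert i T) * (LL (insert i T) - cc i) := by
      intro i
      have h2 : (Finset.univ.filter (fun T : Finset (Fin n) => i ∉ T ∧ T.card = m))
          = (Finset.univ.filter (fun T : Finset (Fin n) => i ∉ T)).filter
              (fun T => T.card = m) :=
        (Finset.filter_filter _ _ _).symm
      conv_rhs => rw [h2, Finset.sum_filter]
      refine Finset.sum_congr rfl fun T hT => ?_
      have hiT : i ∉ T := (Finset.mem_filter.mp hT).2
      rw [Finset.card_insert_of_notMem hiT]
      by_cases hc : T.card = m
      · rw [if_pos (by omega), if_pos hc]
      · rw [if_neg (by omega), if_neg hc]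
    rw [Finset.sum_congr rfl (fun i _ => (hlhs i).symm), hcomm]
    -- now compute ∑ S ∑ i∈S ...
    have hstep : ∀ S : Finset (Fin n), (∑ i ∈ S,
        if S.card = m + 1 then supMass ν S * (LL S - cc i) else 0)
        = if S.card = m + 1 then (m+1:ℝ) * (supMass ν S * LL S)
            - supMass ν S * ∑ i ∈ S, cc i else 0 := by
      intro S
      split
      · rename_i hcard
        have : ∀ i ∈ S, supMass ν S * (LL S - cc i)
            = supMass ν S * LL S - supMass ν S * cc i := fun i _ => by ring
        rw [Finset.sum_congr rfl this, Finset.sum_sub_distrib, Finset.sum_const,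
          nsmul_eq_mul, hcard, ← Finset.mul_sum]
        push_cast
        ring
      · exact Finset.sum_const_zero
    rw [Finset.sum_congr rfl fun S _ => hstep S, ← Finset.sum_filter]
    rw [Finset.sum_sub_distrib, Finset.mul_sum]
    congr 1
    -- ∑_{|T|=m+1} supMass ν T * ∑_{i∈T} cc i = C(k-1,m) * ∑ i N i cc i
    rw [swapA (Finset.univ.filter (fun T : Finset (Fin n) => T.card = m+1)) (supMass ν) cc]
    rw [Finset.mul_sum]
    refine Finset.sum_congr rfl fun i _ => ?_
    -- ∑_{T : |T|=m+1, i ∈ T} supMass ν T = C(k-1,m) * N i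
    have hcnt : ∑ T ∈ (Finset.univ.filter
          (fun T : Finset (Fin n) => T.card = m+1)).filter (fun T => i ∈ T), supMass ν T
        = ((k-1).choose m : ℝ) * mass1 ν i := by
      rw [supMass_sum]
      have hterm : ∀ S : Finset (Fin n),
          ν S * (((((Finset.univ.filter (fun T : Finset (Fin n) => T.card = m+1)).filter
              (fun T => i ∈ T)).filter (fun T => T ⊆ S)).card : ℝ))
          = ((k-1).choose m : ℝ) * (if i ∈ S then ν S else 0) := by
        intro S
        rcases eq_or_ne (ν S) 0 with h0 | h0
        · rw [h0]
          simp
        · have hcardS := hνk S h0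
          rcases Decidable.em (i ∈ S) with hiS | hiS
          · rw [if_pos hiS]
            rw [Finset.filter_filter, Finset.filter_filter]
            rw [count_card S i hiS m, hcardS]
            ring
          · rw [if_neg hiS, mul_zero]
            have : (((Finset.univ.filter (fun T : Finset (Fin n) => T.card = m+1)).filter
                (fun T => i ∈ T)).filter (fun T => T ⊆ S)) = ∅ := by
              rw [Finset.filter_filter, Finset.filter_filter]
              rw [Finset.filter_eq_empty_iff]
              rintro T - ⟨hc, hiT, hTS⟩
              exact hiS (hTS hiT)
            rw [this]
            simp
      rw [Finset.sum_congr rfl fun S _ => hterm S, ← Finset.mul_sum]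
      congr 1
      rw [← Finset.sum_filter, mass1]
    rw [hcnt]
    ring
  -- assemble
  rw [hA, hsum]
  have hchoose : (k : ℝ) * ((k-1).choose m : ℝ) = ((m:ℝ)+1) * (k.choose (m+1) : ℝ) := by
    have hnat : k * ((k-1).choose m) = (k.choose (m+1)) * (m+1) := by
      have h := Nat.add_one_mul_choose_eq (k-1) m
      rw [Nat.sub_add_cancel hk1] at h
      exact h
    have h2 : ((k * ((k-1).choose m) : ℕ) : ℝ) = ((k.choose (m+1) * (m+1) : ℕ) : ℝ) := by
      rw [hnat]
    push_cast at h2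
    linarith
  simp only [hcc]
  have habstract : ∀ (A X C D : ℝ), C ≠ 0 → D ≠ 0 → (k:ℝ) * D = ((m:ℝ)+1) * C →
      (k:ℝ) * (C⁻¹ * A) = X + D⁻¹ * (((m:ℝ)+1) * A - D * X) := by
    intro A X C D hC hD h
    field_simp
    linear_combination A * h
  exact habstract _ _ _ _ hCk.ne' hCk1.ne' (by linarith [hchoose])

lemma flc_cond (r : ℕ) (hr : 1 ≤ r) (μ : Finset (Fin n) → ℝ)
    (hμ0 : ∀ S, 0 ≤ μ S) (i : Fin n) (hPi : 0 < mass1 μ i)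
    (hFLC : ConcaveOn ℝ {z : Fin n → ℝ | ∀ i, 0 < z i}
      (fun z => Real.log (genPoly μ (fun i => z i ^ (1 / (r : ℝ)))))) :
    ConcaveOn ℝ {z : Fin n → ℝ | ∀ i, 0 < z i}
      (fun z => Real.log (genPoly (cmeas μ i) (fun j => z j ^ (1 / (r : ℝ))))) := by
  have hrR : (0:ℝ) < r := by exact_mod_cast hr
  set α : ℝ := 1 / (r : ℝ) with hαdef
  have hα : 0 < α := by positivity
  -- the numerator polynomial
  set W : (Fin n → ℝ) → ℝ := fun y =>
    ∑ S ∈ Finset.univ.filter (fun S : Finset (Fin n) => i ∉ S),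
      μ (insert i S) * ∏ j ∈ S, y j with hW
  have hgen : ∀ z : Fin n → ℝ,
      genPoly (cmeas μ i) (fun j => z j ^ α) = W (fun j => z j ^ α) / mass1 μ i := by
    intro z
    unfold genPoly
    rw [← Finset.sum_filter_add_sum_filter_not Finset.univ
      (fun S : Finset (Fin n) => i ∉ S)]
    have hz2 : ∑ S ∈ Finset.univ.filter (fun S : Finset (Fin n) => ¬ i ∉ S),
        cmeas μ i S * ∏ j ∈ S, z j ^ α = 0 := by
      refine Finset.sum_eq_zero fun S hS => ?_
      rw [cmeas, if_pos (not_not.mp (Finset.mem_filter.mp hS).2), zero_mul]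
    rw [hz2, add_zero, hW, Finset.sum_div]
    refine Finset.sum_congr rfl fun S hS => ?_
    rw [cmeas, if_neg (Finset.mem_filter.mp hS).2]
    ring
  -- positivity of W on positive vectors
  have hWpos : ∀ z : Fin n → ℝ, (∀ j, 0 < z j) → 0 < W (fun j => z j ^ α) := by
    intro z hz
    obtain ⟨S, hiS, hS⟩ := exists_of_mass1_ne μ hPi.ne'
    refine Finset.sum_pos' (fun S' _ => mul_nonneg (hμ0 _)
      (Finset.prod_nonneg fun j _ => (Real.rpow_pos_of_pos (hz j) α).le)) ?_
    refine ⟨S.erase i, Finset.mem_filter.mpr ⟨Finset.mem_univ _, Finset.notMem_erase i S⟩, ?_⟩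
    rw [Finset.insert_erase hiS]
    exact mul_pos ((hμ0 S).lt_of_ne' hS)
      (Finset.prod_pos fun j _ => Real.rpow_pos_of_pos (hz j) α)
  -- limit representation
  have hlim : ∀ z : Fin n → ℝ, (∀ j, 0 < z j) →
      Filter.Tendsto (fun t : ℝ =>
          Real.log (genPoly μ (fun j => (Function.update z i t) j ^ α)) - α * Real.log t)
        Filter.atTop (nhds (Real.log (W (fun j => z j ^ α)))) := by
    intro z hz
    set R : ℝ := ∑ S ∈ Finset.univ.filter (fun S : Finset (Fin n) => i ∉ S),
      μ S * ∏ j ∈ S, z j ^ α with hR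
    have hR0 : 0 ≤ R :=
      Finset.sum_nonneg fun S _ => mul_nonneg (hμ0 S)
        (Finset.prod_nonneg fun j _ => (Real.rpow_pos_of_pos (hz j) α).le)
    have hsplit : ∀ t : ℝ, 0 < t →
        genPoly μ (fun j => (Function.update z i t) j ^ α)
          = t ^ α * W (fun j => z j ^ α) + R := by
      intro t ht
      unfold genPoly
      rw [← Finset.sum_filter_add_sum_filter_not Finset.univ
        (fun S : Finset (Fin n) => i ∈ S)]
      have h1 : ∑ S ∈ Finset.univ.filter (fun S : Finset (Fin n) => i ∈ S),
          μ S * ∏ j ∈ S, (Function.update z i t) j ^ α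
          = t ^ α * W (fun j => z j ^ α) := by
        rw [sum_insert_reindex i (fun S => μ S * ∏ j ∈ S, (Function.update z i t) j ^ α)]
        rw [hW, Finset.mul_sum]
        refine Finset.sum_congr rfl fun T hT => ?_
        have hiT : i ∉ T := (Finset.mem_filter.mp hT).2
        have hprod : ∏ j ∈ insert i T, (Function.update z i t) j ^ α
            = t ^ α * ∏ j ∈ T, z j ^ α := by
          rw [Finset.prod_insert hiT]
          congr 1
          · rw [Function.update_self]
          · refine Finset.prod_congr rfl fun j hj => ?_
            rw [Function.update_of_ne (fun h => hiT (by rw [← h]; exact hj))]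
        rw [hprod]
        ring
      have h2 : ∑ S ∈ Finset.univ.filter (fun S : Finset (Fin n) => ¬ i ∈ S),
          μ S * ∏ j ∈ S, (Function.update z i t) j ^ α = R := by
        rw [hR]
        refine Finset.sum_congr rfl fun S hS => ?_
        have hiS : i ∉ S := (Finset.mem_filter.mp hS).2
        congr 1
        refine Finset.prod_congr rfl fun j hj => ?_
        rw [Function.update_of_ne (fun h => hiS (by rw [← h]; exact hj))]
      rw [h1, h2]
    have hWp := hWpos z hz
    have heq : (fun t : ℝ =>
        Real.log (genPoly μ (fun j => (Function.update z i t) j ^ α)) - α * Real.log t)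
          =ᶠ[Filter.atTop] fun t : ℝ =>
            Real.log (W (fun j => z j ^ α) + R * (t ^ α)⁻¹) := by
      filter_upwards [Filter.eventually_gt_atTop (0:ℝ)] with t ht
      rw [hsplit t ht]
      have htα : 0 < t ^ α := Real.rpow_pos_of_pos ht α
      have harg : t ^ α * W (fun j => z j ^ α) + R
          = t ^ α * (W (fun j => z j ^ α) + R * (t ^ α)⁻¹) := by
        field_simp
      rw [harg, Real.log_mul htα.ne' (by positivity : (0:ℝ) < W (fun j => z j ^ α) + R * (t ^ α)⁻¹).ne']
      rw [Real.log_rpow ht]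
      ring
    have htail : Filter.Tendsto (fun t : ℝ => Real.log (W (fun j => z j ^ α) + R * (t ^ α)⁻¹))
        Filter.atTop (nhds (Real.log (W (fun j => z j ^ α)))) := by
      have h1 : Filter.Tendsto (fun t : ℝ => t ^ α) Filter.atTop Filter.atTop :=
        tendsto_rpow_atTop hα
      have h2 : Filter.Tendsto (fun t : ℝ => R * (t ^ α)⁻¹) Filter.atTop (nhds 0) := by
        have := h1.inv_tendsto_atTop
        have h3 := this.const_mul R
        simpa using h3
      have h4 : Filter.Tendsto (fun t : ℝ => W (fun j => z j ^ α) + R * (t ^ α)⁻¹)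
          Filter.atTop (nhds (W (fun j => z j ^ α) + 0)) :=
        tendsto_const_nhds.add h2
      rw [add_zero] at h4
      exact h4.log hWp.ne'
    exact Filter.Tendsto.congr' heq.symm htail
  -- prove concavity
  constructor
  · -- convexity of the positive orthant
    intro x hx y hy a b ha hb hab
    intro j
    simp only [Pi.add_apply, Pi.smul_apply, smul_eq_mul]
    rcases eq_or_lt_of_le ha with ha0 | ha0
    · rw [← ha0] at hab ⊢
      simp only [zero_mul, zero_add] at hab ⊢
      rw [hab]
      simpa using hy j
    · have hb' : 0 ≤ b * y j := mul_nonneg hb (hy j).le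
      have := mul_pos ha0 (hx j)
      linarith
  · intro x hx y hy a b ha hb hab
    simp only [smul_eq_mul]
    -- the inequality for each t, then pass to the limit
    have hkey : ∀ t : ℝ, 0 < t →
        a * (Real.log (genPoly μ (fun j => (Function.update x i t) j ^ α)) - α * Real.log t)
          + b * (Real.log (genPoly μ (fun j => (Function.update y i t) j ^ α)) - α * Real.log t)
        ≤ Real.log (genPoly μ (fun j => (Function.update (a • x + b • y) i t) j ^ α))
            - α * Real.log t := by
      intro t ht
      have hux : Function.update x i t ∈ {z : Fin n → ℝ | ∀ j, 0 < z j} := by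
        intro j
        rcases eq_or_ne j i with h | h
        · rw [h, Function.update_self]; exact ht
        · rw [Function.update_of_ne h]; exact hx j
      have huy : Function.update y i t ∈ {z : Fin n → ℝ | ∀ j, 0 < z j} := by
        intro j
        rcases eq_or_ne j i with h | h
        · rw [h, Function.update_self]; exact ht
        · rw [Function.update_of_ne h]; exact hy j
      have h := hFLC.2 hux huy ha hb hab
      simp only [smul_eq_mul] at h
      have hcomb : (a • Function.update x i t + b • Function.update y i t)
          = Function.update (a • x + b • y) i t := by
        funext j
        rcases eq_or_ne j i with hj | hj
        · rw [hj]
          simp only [Pi.add_apply, Pi.smul_apply, smul_eq_mul, Function.update_self]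
          linear_combination t * hab
        · simp only [Pi.add_apply, Pi.smul_apply, smul_eq_mul, Function.update_of_ne hj]
      rw [hcomb] at h
      have hexpand : a * (Real.log (genPoly μ (fun j => (Function.update x i t) j ^ α))
            - α * Real.log t)
          + b * (Real.log (genPoly μ (fun j => (Function.update y i t) j ^ α))
            - α * Real.log t)
          = a * Real.log (genPoly μ (fun j => (Function.update x i t) j ^ α))
            + b * Real.log (genPoly μ (fun j => (Function.update y i t) j ^ α))
            - α * Real.log t := by
        linear_combination (-(α * Real.log t)) * hab
      rw [hexpand]
      linarith
    have hmem : (a • x + b • y) ∈ {z : Fin n → ℝ | ∀ j, 0 < z j} := by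
      intro j
      simp only [Pi.add_apply, Pi.smul_apply, smul_eq_mul]
      rcases eq_or_lt_of_le ha with ha0 | ha0
      · have hb1 : b = 1 := by linarith
        rw [← ha0, hb1]
        simpa using hy j
      · have hb' : 0 ≤ b * y j := mul_nonneg hb (hy j).le
        have := mul_pos ha0 (hx j)
        linarith
    -- pass to the limit
    have hx' := hlim x hx
    have hy' := hlim y hy
    have hxy' := hlim (a • x + b • y) hmem
    have hcomb2 : Filter.Tendsto (fun t : ℝ =>
        a * (Real.log (genPoly μ (fun j => (Function.update x i t) j ^ α)) - α * Real.log t)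
          + b * (Real.log (genPoly μ (fun j => (Function.update y i t) j ^ α)) - α * Real.log t))
        Filter.atTop
        (nhds (a * Real.log (W (fun j => x j ^ α)) + b * Real.log (W (fun j => y j ^ α)))) :=
      (hx'.const_mul a).add (hy'.const_mul b)
    have hineq : a * Real.log (W (fun j => x j ^ α)) + b * Real.log (W (fun j => y j ^ α))
        ≤ Real.log (W (fun j => (a • x + b • y) j ^ α)) := by
      refine le_of_tendsto_of_tendsto hcomb2 hxy' ?_
      filter_upwards [Filter.eventually_gt_atTop (0:ℝ)] with t ht
      exact hkey t ht
    have hfin : ∀ z : Fin n → ℝ, (∀ j, 0 < z j) →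
        Real.log (genPoly (cmeas μ i) (fun j => z j ^ α))
          = Real.log (W (fun j => z j ^ α)) - Real.log (mass1 μ i) := by
      intro z hz
      rw [hgen z, Real.log_div (hWpos z hz).ne' hPi.ne']
    show a * Real.log (genPoly (cmeas μ i) (fun j => x j ^ α))
        + b * Real.log (genPoly (cmeas μ i) (fun j => y j ^ α))
      ≤ Real.log (genPoly (cmeas μ i) (fun j => (a • x + b • y) j ^ α))
    rw [hfin x hx, hfin y hy, hfin _ hmem]
    have h2 : a * Real.log (mass1 μ i) + b * Real.log (mass1 μ i) = Real.log (mass1 μ i) := by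
      linear_combination (Real.log (mass1 μ i)) * hab
    linarith [hineq, h2]

lemma main (l : ℕ) : ∀ (n k r : ℕ) (μ ν : Finset (Fin n) → ℝ), 1 ≤ r → l + r ≤ k →
    (∀ S, 0 ≤ μ S) → (∀ S, μ S ≠ 0 → S.card = k) → (∑ S : Finset (Fin n), μ S = 1) →
    ConcaveOn ℝ {z : Fin n → ℝ | ∀ i, 0 < z i}
      (fun z => Real.log (genPoly μ (fun i => z i ^ (1 / (r : ℝ))))) →
    (∀ S, 0 ≤ ν S) → (∀ S, ν S ≠ 0 → S.card = k) →
    (∑ S : Finset (Fin n), ν S = 1) → (∀ S, μ S = 0 → ν S = 0) →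
    KLdiv (downTo k l ν) (downTo k l μ)
      ≤ (1 - ((k - l).choose r : ℝ) / (k.choose r : ℝ)) * KLdiv ν μ := by
  induction l with
  | zero =>
    intro n k r μ ν hr hl hμ0 hμk hμ1 hFLC hν0 hνk hν1 hac
    have hrk : r ≤ k := by omega
    have hC : (k.choose r : ℝ) ≠ 0 := by
      have h := Nat.choose_pos hrk
      exact_mod_cast h.ne'
    have hκ : ((k - 0).choose r : ℝ) / (k.choose r : ℝ) = 1 := by
      rw [Nat.sub_zero]
      exact div_self hC
    rw [hκ]
    have hd : ∀ (f : Finset (Fin n) → ℝ), (∑ S : Finset (Fin n), f S = 1) →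
        ∀ T, downTo k 0 f T = if T = ∅ then 1 else 0 := by
      intro f hf T
      rcases eq_or_ne T ∅ with hT | hT
      · subst hT
        rw [downTo, if_pos Finset.card_empty, if_pos rfl]
        have : Finset.univ.filter (fun S : Finset (Fin n) => ∅ ⊆ S) = Finset.univ := by
          refine Finset.filter_true_of_mem fun S _ => Finset.empty_subset S
        rw [this, hf, Nat.choose_zero_right]
        norm_num
      · rw [downTo, if_neg (by simpa [Finset.card_eq_zero] using hT), if_neg hT]
    have hLHS : KLdiv (downTo k 0 ν) (downTo k 0 μ) = 0 := by
      unfold KLdiv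
      refine Finset.sum_eq_zero fun T _ => ?_
      rw [hd ν hν1 T, hd μ hμ1 T]
      rcases eq_or_ne T ∅ with hT | hT
      · rw [if_pos hT]
        norm_num
      · rw [if_neg hT, zero_mul]
    rw [hLHS]
    simp
  | succ m ih =>
    intro n k r μ ν hr hl hμ0 hμk hμ1 hFLC hν0 hνk hν1 hac
    have hk1 : 1 ≤ k := by omega
    have hrk : r ≤ k := by omega
    have hrk1 : r ≤ k - 1 := by omega
    have hkpos : (0:ℝ) < k := by exact_mod_cast hk1
    have hrpos : (0:ℝ) < r := by exact_mod_cast hr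
    have hsub : k - 1 - m = k - (m + 1) := by omega
    have hCk : (0:ℝ) < (k.choose r : ℝ) := by exact_mod_cast Nat.choose_pos hrk
    have hCk1 : (0:ℝ) < ((k-1).choose r : ℝ) := by exact_mod_cast Nat.choose_pos hrk1
    have hνP : ∀ i, mass1 ν i ≠ 0 → 0 < mass1 μ i := by
      intro i hNi
      obtain ⟨S, hiS, hS⟩ := exists_of_mass1_ne ν hNi
      have hμS : μ S ≠ 0 := fun h => hS (hac S h)
      exact lt_of_lt_of_le ((hμ0 S).lt_of_ne' hμS) (le_mass1 μ hμ0 hiS)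
    have hN0 : ∀ i, 0 ≤ mass1 ν i := fun i => mass1_nonneg ν hν0 i
    -- conditional measures are measures
    have hcnonneg : ∀ (f : Finset (Fin n) → ℝ), (∀ S, 0 ≤ f S) → ∀ (i : Fin n) S,
        0 ≤ cmeas f i S := by
      intro f hf i S
      rw [cmeas]
      split
      · exact le_refl 0
      · exact div_nonneg (hf _) (mass1_nonneg f hf i)
    have hccard : ∀ (f : Finset (Fin n) → ℝ), (∀ S, f S ≠ 0 → S.card = k) → ∀ (i : Fin n) S,
        cmeas f i S ≠ 0 → S.card = k - 1 := by
      intro f hfk i S hS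
      rw [cmeas] at hS
      split_ifs at hS with h
      · exact absurd rfl hS
      · have hnum : f (insert i S) ≠ 0 := fun h0 => hS (by rw [h0, zero_div])
        have hcard := hfk _ hnum
        have := Finset.card_insert_of_notMem h
        omega
    have hcsum : ∀ (f : Finset (Fin n) → ℝ) (i : Fin n), mass1 f i ≠ 0 →
        ∑ S : Finset (Fin n), cmeas f i S = 1 := by
      intro f i hfi
      have h1 : ∑ S : Finset (Fin n), cmeas f i S
          = ∑ S ∈ Finset.univ.filter (fun S => i ∉ S), f (insert i S) / mass1 f i := by
        rw [← Finset.sum_filter_add_sum_filter_not Finset.univ (fun S : Finset (Fin n) => i ∉ S)]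
        have h2 : ∑ S ∈ Finset.univ.filter (fun S : Finset (Fin n) => ¬ i ∉ S),
            cmeas f i S = 0 := by
          refine Finset.sum_eq_zero fun S hS => ?_
          rw [cmeas, if_pos (not_not.mp (Finset.mem_filter.mp hS).2)]
        have h3 : ∀ S ∈ Finset.univ.filter (fun S : Finset (Fin n) => i ∉ S),
            cmeas f i S = f (insert i S) / mass1 f i := by
          intro S hS
          rw [cmeas, if_neg (Finset.mem_filter.mp hS).2]
        rw [h2, add_zero, Finset.sum_congr rfl h3]
      rw [h1, ← Finset.sum_div, ← sum_insert_reindex i f]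
      have h4 : (∑ S ∈ Finset.univ.filter (fun S => i ∈ S), f S) = mass1 f i := rfl
      rw [h4]
      exact div_self hfi
    have hcac : ∀ (i : Fin n), mass1 μ i ≠ 0 → ∀ S, cmeas μ i S = 0 → cmeas ν i S = 0 := by
      intro i hPi S
      rw [cmeas, cmeas]
      split_ifs with h
      · intro _; rfl
      · intro h0
        rcases div_eq_zero_iff.mp h0 with h1 | h1
        · rw [hac _ h1, zero_div]
        · exact absurd h1 hPi
    -- IH for each relevant i
    have hIH : ∀ i, mass1 ν i ≠ 0 →
        KLdiv (downTo (k-1) m (cmeas ν i)) (downTo (k-1) m (cmeas μ i))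
          ≤ (1 - ((k-1-m).choose r : ℝ) / ((k-1).choose r : ℝ)) *
              KLdiv (cmeas ν i) (cmeas μ i) := by
      intro i hNi
      have hPi : 0 < mass1 μ i := hνP i hNi
      have hνi : mass1 ν i ≠ 0 := hNi
      exact ih n (k-1) r (cmeas μ i) (cmeas ν i) hr (by omega)
        (hcnonneg μ hμ0 i) (hccard μ hμk i) (hcsum μ i hPi.ne')
        (flc_cond r hr μ hμ0 i hPi hFLC)
        (hcnonneg ν hν0 i) (hccard ν hνk i) (hcsum ν i hνi)
        (hcac i hPi.ne')
    -- identities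
    have hI := identI k hk1 μ ν hμ0 hν0 hνk hac
    have hII := identII k m (by omega) μ ν hμ0 hμk hν0 hνk hac
    have hS1 := step1 k r hr hk1 μ ν hμ0 hμk hμ1 hFLC hν0 hνk hν1 hac
    set D := KLdiv ν μ with hD
    set X := ∑ i, mass1 ν i * Real.log (mass1 ν i / mass1 μ i) with hX
    set κ' : ℝ := ((k-1-m).choose r : ℝ) / ((k-1).choose r : ℝ) with hκ'
    have hκ'0 : 0 ≤ κ' := by positivity
    have hterm : ∀ i : Fin n, mass1 ν i *
        KLdiv (downTo (k-1) m (cmeas ν i)) (downTo (k-1) m (cmeas μ i))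
        ≤ (1 - κ') * (mass1 ν i * KLdiv (cmeas ν i) (cmeas μ i)) := by
      intro i
      rcases eq_or_ne (mass1 ν i) 0 with h0 | h0
      · rw [h0, zero_mul, zero_mul, mul_zero]
      · have h1 := hIH i h0
        have hNpos : 0 < mass1 ν i := (hN0 i).lt_of_ne' h0
        calc mass1 ν i * KLdiv (downTo (k-1) m (cmeas ν i)) (downTo (k-1) m (cmeas μ i))
            ≤ mass1 ν i * ((1 - κ') * KLdiv (cmeas ν i) (cmeas μ i)) :=
              mul_le_mul_of_nonneg_left h1 hNpos.le
          _ = (1 - κ') * (mass1 ν i * KLdiv (cmeas ν i) (cmeas μ i)) := by ring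
    have hCsum : ∑ i, mass1 ν i *
        KLdiv (downTo (k-1) m (cmeas ν i)) (downTo (k-1) m (cmeas μ i))
        ≤ (1 - κ') * ∑ i, mass1 ν i * KLdiv (cmeas ν i) (cmeas μ i) := by
      rw [Finset.mul_sum]
      exact Finset.sum_le_sum fun i _ => hterm i
    -- the choose identity
    have hid : ((k:ℝ) - r) * (k.choose r : ℝ) = (k:ℝ) * ((k-1).choose r : ℝ) := by
      have hnat1 : k.choose (r+1) * (r+1) = k.choose r * (k - r) := Nat.choose_succ_right_eq k r
      have hnat2 : k * ((k-1).choose r) = k.choose (r+1) * (r+1) := by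
        have h := Nat.add_one_mul_choose_eq (k-1) r
        rw [Nat.sub_add_cancel hk1] at h
        exact h
      have hnat3 : k.choose r * (k - r) = k * ((k-1).choose r) := by rw [← hnat1, hnat2]
      have h4 : ((k.choose r * (k - r) : ℕ) : ℝ) = ((k * ((k-1).choose r) : ℕ) : ℝ) := by
        rw [hnat3]
      push_cast [Nat.cast_sub hrk] at h4
      linarith
    -- key bound times k
    have hkey : (k:ℝ) * KLdiv (downTo k (m+1) ν) (downTo k (m+1) μ)
        ≤ (k:ℝ) * ((1 - ((k - (m+1)).choose r : ℝ) / (k.choose r : ℝ)) * D) := by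
      rw [hII]
      have hB : ∑ i, mass1 ν i * KLdiv (cmeas ν i) (cmeas μ i)
          = (k:ℝ) * D - X := by
        rw [hD, hX]
        linarith [hI]
      have hstep2 : X + ∑ i, mass1 ν i *
          KLdiv (downTo (k-1) m (cmeas ν i)) (downTo (k-1) m (cmeas μ i))
          ≤ (1 - κ') * ((k:ℝ) * D) + κ' * X := by
        have h5 := hCsum
        rw [hB] at h5
        nlinarith [h5]
      have hstep3 : (1 - κ') * ((k:ℝ) * D) + κ' * X
          ≤ (1 - κ') * ((k:ℝ) * D) + κ' * ((r:ℝ) * D) := by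
        have h6 : κ' * X ≤ κ' * ((r:ℝ) * D) :=
          mul_le_mul_of_nonneg_left hS1 hκ'0
        linarith
      have hstep4 : (1 - κ') * ((k:ℝ) * D) + κ' * ((r:ℝ) * D)
          = (k:ℝ) * ((1 - ((k - (m+1)).choose r : ℝ) / (k.choose r : ℝ)) * D) := by
        rw [hκ', hsub]
        have habs : ∀ (Dv C C1 C2 : ℝ), C ≠ 0 → C1 ≠ 0 →
            ((k:ℝ) - r) * C = (k:ℝ) * C1 →
            (1 - C2 / C1) * ((k:ℝ) * Dv) + (C2 / C1) * ((r:ℝ) * Dv)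
              = (k:ℝ) * ((1 - C2 / C) * Dv) := by
          intro Dv C C1 C2 hC hC1 h
          field_simp
          ring_nf
          linear_combination (-(Dv * C2)) * h
        exact habs D _ _ _ hCk.ne' hCk1.ne' hid
      have hX' : X = ∑ i, mass1 ν i * Real.log (mass1 ν i / mass1 μ i) := hX
      calc X + ∑ i, mass1 ν i *
          KLdiv (downTo (k-1) m (cmeas ν i)) (downTo (k-1) m (cmeas μ i))
          ≤ (1 - κ') * ((k:ℝ) * D) + κ' * X := hstep2
        _ ≤ (1 - κ') * ((k:ℝ) * D) + κ' * ((r:ℝ) * D) := hstep3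
        _ = (k:ℝ) * ((1 - ((k - (m+1)).choose r : ℝ) / (k.choose r : ℝ)) * D) := hstep4
    exact le_of_mul_le_mul_left hkey hkpos

end EntCon

theorem stmt_7 (n k l r : ℕ) (hr : 1 ≤ r) (hl : l + r ≤ k)
    (μ : Finset (Fin n) → ℝ)
    (hμ0 : ∀ S, 0 ≤ μ S)
    (hμk : ∀ S, μ S ≠ 0 → S.card = k)
    (hμ1 : ∑ S : Finset (Fin n), μ S = 1)
    (hFLC : ConcaveOn ℝ {z : Fin n → ℝ | ∀ i, 0 < z i}
      (fun z => Real.log (genPoly μ (fun i => z i ^ (1 / (r : ℝ))))))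
    (κ : ℝ) (hκ : κ = ((k - l).choose r : ℝ) / (k.choose r : ℝ)) :
    ∀ ν : Finset (Fin n) → ℝ,
      (∀ S, 0 ≤ ν S) → (∀ S, ν S ≠ 0 → S.card = k) →
      (∑ S : Finset (Fin n), ν S = 1) → (∀ S, μ S = 0 → ν S = 0) →
      KLdiv (downTo k l ν) (downTo k l μ) ≤ (1 - κ) * KLdiv ν μ := by
  intro ν hν0 hνk hν1 hac
  subst hκ
  exact EntCon.main l n k r μ ν hr hl hμ0 hμk hμ1 hFLC hν0 hνk hν1 hac
end

section
/- Let Ω be a finite set, let μ be a fully supported probability distribution on Ω, and let P be a row-stochastic matrix indexed by Ω that is reversible with respect to μ, i.e., μ(x)P(x,y) = μ(y)P(y,x) for all x, y ∈ Ω. Suppose there is α ∈ (0,1] such that for every probability distribution ν on Ω, D(ν P ‖ μ P) ≤ (1−α)·D(ν ‖ μ). Then for every f : Ω → ℝ_{>0} with E_μ[f] = 1, α·Ent_μ[f] ≤ E_P(f, log f), where E_P(f, log f) = ∑_{x∈Ω} μ(x)·((I−P)f)(x)·log f(x). -/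
/-!
Apply the contraction hypothesis to `ν = μ f`. By reversibility `ν P = μ (P f)` and `μ P = μ`, so it
says `Ent_μ[P f] ≤ (1 - α) Ent_μ[f]`. Writing `g = P f`, the Dirichlet form is
`E_μ[f log f] - E_μ[g log f]`, and Gibbs' inequality `E_μ[g log f] ≤ E_μ[g log g] = Ent_μ[g]`
(both densities have mean one) bounds it below by `Ent_μ[f] - Ent_μ[g] ≥ α Ent_μ[f]`.
-/

open Finset Real

theorem sum_mul_mul_log_le_sum_mul_mul_log_self {ι : Type*} [Fintype ι] {w p q : ι → ℝ}
    (hw : ∀ i, 0 ≤ w i) (hp : ∀ i, 0 < p i) (hq : ∀ i, 0 < q i)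
    (hpq : ∑ i, w i * q i = ∑ i, w i * p i) :
    ∑ i, w i * (p i * log (q i)) ≤ ∑ i, w i * (p i * log (p i)) := by
  have hterm : ∀ i, w i * (p i * log (q i)) - w i * (p i * log (p i)) ≤ w i * q i - w i * p i := by
    intro i
    have hlog := log_le_sub_one_of_pos (div_pos (hq i) (hp i))
    rw [log_div (hq i).ne' (hp i).ne'] at hlog
    have key : p i * (log (q i) - log (p i)) ≤ q i - p i := by
      calc p i * (log (q i) - log (p i)) ≤ p i * (q i / p i - 1) :=
            mul_le_mul_of_nonneg_left hlog (hp i).le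
        _ = q i - p i := by rw [mul_sub, mul_one, mul_div_cancel₀ _ (hp i).ne']
    have := mul_le_mul_of_nonneg_left key (hw i)
    linarith
  have := sum_le_sum fun i (_ : i ∈ univ) => hterm i
  rw [sum_sub_distrib, sum_sub_distrib, hpq, sub_self] at this
  linarith

theorem sum_mul_pos_of_stochastic {Ω : Type*} [Fintype Ω] {P : Ω → Ω → ℝ}
    (hP0 : ∀ x y, 0 ≤ P x y) (hP1 : ∀ x, ∑ y, P x y = 1) {f : Ω → ℝ} (hf : ∀ x, 0 < f x)
    (y : Ω) : 0 < ∑ x, P y x * f x := by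
  obtain ⟨x, -, hx⟩ := exists_ne_zero_of_sum_ne_zero
    (by rw [hP1 y]; exact one_ne_zero : ∑ x, P y x ≠ 0)
  exact sum_pos' (fun x _ => mul_nonneg (hP0 y x) (hf x).le)
    ⟨x, mem_univ x, mul_pos ((hP0 y x).lt_of_ne (Ne.symm hx)) (hf x)⟩

section Reversible

variable {Ω : Type*} [Fintype Ω] {μ : Ω → ℝ} {P : Ω → Ω → ℝ}

theorem sum_mul_mul_eq_mul_sum_of_reversible (hrev : ∀ x y, μ x * P x y = μ y * P y x)
    (f : Ω → ℝ) (y : Ω) : ∑ x, μ x * f x * P x y = μ y * ∑ x, P y x * f x := by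
  rw [mul_sum]
  refine sum_congr rfl fun x _ => ?_
  rw [mul_right_comm, hrev, mul_assoc]

theorem sum_mul_eq_of_reversible (hrev : ∀ x y, μ x * P x y = μ y * P y x)
    (hP1 : ∀ x, ∑ y, P x y = 1) (y : Ω) : ∑ x, μ x * P x y = μ y := by
  simpa [hP1] using sum_mul_mul_eq_mul_sum_of_reversible hrev (fun _ => 1) y

theorem sum_mul_sum_eq_of_reversible (hrev : ∀ x y, μ x * P x y = μ y * P y x)
    (hP1 : ∀ x, ∑ y, P x y = 1) (f : Ω → ℝ) :
    ∑ y, μ y * ∑ x, P y x * f x = ∑ x, μ x * f x := by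
  simp_rw [← sum_mul_mul_eq_mul_sum_of_reversible hrev f]
  rw [sum_comm]
  simp_rw [← mul_sum, hP1, mul_one]

end Reversible

theorem stmt_10_general {Ω : Type*} [Fintype Ω]
    (μ : Ω → ℝ) (hμpos : ∀ x, 0 < μ x)
    (P : Ω → Ω → ℝ) (hP0 : ∀ x y, 0 ≤ P x y) (hP1 : ∀ x, ∑ y, P x y = 1)
    (hrev : ∀ x y, μ x * P x y = μ y * P y x)
    (α : ℝ)
    (hcontract : ∀ ν : Ω → ℝ, (∀ x, 0 ≤ ν x) → (∑ x, ν x = 1) →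
      ∑ y, (∑ x, ν x * P x y) *
          Real.log ((∑ x, ν x * P x y) / (∑ x, μ x * P x y)) ≤
        (1 - α) * ∑ x, ν x * Real.log (ν x / μ x)) :
    ∀ f : Ω → ℝ, (∀ x, 0 < f x) → (∑ x, μ x * f x = 1) →
      α * (∑ x, μ x * (f x * Real.log (f x)) -
            (∑ x, μ x * f x) * Real.log (∑ x, μ x * f x)) ≤
        ∑ x, μ x * ((f x - ∑ y, P x y * f y) * Real.log (f x)) := by
  intro f hf hf1
  set g : Ω → ℝ := fun y => ∑ x, P y x * f x
  have hent : ∑ y, μ y * (g y * log (g y)) ≤ (1 - α) * ∑ x, μ x * (f x * log (f x)) := by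
    have := hcontract (fun x => μ x * f x) (fun x => (mul_pos (hμpos x) (hf x)).le) hf1
    simp only [sum_mul_mul_eq_mul_sum_of_reversible hrev, sum_mul_eq_of_reversible hrev hP1,
      mul_div_cancel_left₀ _ (hμpos _).ne'] at this
    simpa only [mul_assoc] using this
  have hgibbs : ∑ y, μ y * (g y * log (f y)) ≤ ∑ y, μ y * (g y * log (g y)) :=
    sum_mul_mul_log_le_sum_mul_mul_log_self (fun y => (hμpos y).le)
      (sum_mul_pos_of_stochastic hP0 hP1 hf) hf (sum_mul_sum_eq_of_reversible hrev hP1 f).symm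
  have hdirichlet : ∑ x, μ x * ((f x - ∑ y, P x y * f y) * log (f x)) =
      ∑ x, μ x * (f x * log (f x)) - ∑ x, μ x * (g x * log (f x)) := by
    rw [← sum_sub_distrib]
    exact sum_congr rfl fun x _ => by ring
  rw [hf1, log_one, mul_zero, sub_zero, hdirichlet]
  linarith

theorem stmt_10 {Ω : Type*} [Fintype Ω]
    (μ : Ω → ℝ) (hμpos : ∀ x, 0 < μ x) (hμ1 : ∑ x, μ x = 1)
    (P : Ω → Ω → ℝ) (hP0 : ∀ x y, 0 ≤ P x y) (hP1 : ∀ x, ∑ y, P x y = 1)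
    (hrev : ∀ x y, μ x * P x y = μ y * P y x)
    (α : ℝ) (hα0 : 0 < α) (hα1 : α ≤ 1)
    (hcontract : ∀ ν : Ω → ℝ, (∀ x, 0 ≤ ν x) → (∑ x, ν x = 1) →
      ∑ y, (∑ x, ν x * P x y) *
          Real.log ((∑ x, ν x * P x y) / (∑ x, μ x * P x y)) ≤
        (1 - α) * ∑ x, ν x * Real.log (ν x / μ x)) :
    ∀ f : Ω → ℝ, (∀ x, 0 < f x) → (∑ x, μ x * f x = 1) →
      α * (∑ x, μ x * (f x * Real.log (f x)) -
            (∑ x, μ x * f x) * Real.log (∑ x, μ x * f x)) ≤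
        ∑ x, μ x * ((f x - ∑ y, P x y * f y) * Real.log (f x)) :=
  stmt_10_general μ hμpos P hP0 hP1 hrev α hcontract
end

section
/- Let μ be a fully supported probability distribution on {−1,1}ⁿ and let α₁,…,αₙ ∈ (0,1]. Suppose that the map (z₁,…,zₙ, w₁,…,wₙ) ↦ log( ∑_{x ∈ {−1,1}ⁿ} μ(x) · ∏_{i : x_i = 1} z_i^{α_i} · ∏_{i : x_i = −1} w_i^{α_i} ) is concave on ℝ^{2n}_{>0}. Then for every probability distribution ν on {−1,1}ⁿ, ∑_{i=1}^n α_i · D(ν_i ‖ μ_i) ≤ D(ν ‖ μ), where ν_i (resp. μ_i) denotes the marginal distribution on {−1,1} of the i-th coordinate under ν (resp. μ). -/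
/-!
Write `g(z, w) = ∑ₓ μ(x) ∏_{xᵢ = 1} zᵢ^{αᵢ} ∏_{xᵢ = -1} wᵢ^{αᵢ}`, so that `g(1, 1) = 1`. Concavity of
`log g` puts it below its tangent plane at `(1, 1)`, whose slope in `zᵢ` (resp. `wᵢ`) is
`αᵢ μᵢ(1)` (resp. `αᵢ μᵢ(-1)`). The Donsker–Varadhan inequality
`∑ ν log h ≤ D(ν ‖ μ) + log ∑ μ h`, applied to the product test function
`h(x) = ∏ zᵢ^{αᵢ} or wᵢ^{αᵢ}` (for which `∑ μ h = g(z, w)`), therefore gives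
`∑ᵢ αᵢ ∑_b (νᵢ(b) log qᵢ(b) - μᵢ(b) (qᵢ(b) - 1)) ≤ D(ν ‖ μ)` for every positive `q = (z, w)`.
Taking `qᵢ(b) = νᵢ(b) / μᵢ(b)` turns the left side into `∑ᵢ αᵢ D(νᵢ ‖ μᵢ)`; as `νᵢ(b)` may
vanish while `q` must stay positive, this value is only approached, up to `ε`.
-/

open Finset

/-- The marginal of the `i`-th coordinate of a distribution on `{−1,1}ⁿ`. -/
noncomputable def coordMarg {n : ℕ} (i : Fin n) (ν : (Fin n → Bool) → ℝ) (b : Bool) : ℝ :=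
  ∑ x ∈ Finset.univ.filter (fun x : Fin n → Bool => x i = b), ν x

open Real

lemma ConcaveOn.sub_le_of_hasDerivAt_lineMap {E : Type*} [AddCommGroup E] [Module ℝ E]
    {s : Set E} {f : E → ℝ} (hf : ConcaveOn ℝ s f) {x y : E} (hx : x ∈ s) (hy : y ∈ s) {d : ℝ}
    (hd : HasDerivAt (fun t : ℝ => f (AffineMap.lineMap x y t)) d 0) :
    f y - f x ≤ d := by
  have hconv := (hf.comp_affineMap (AffineMap.lineMap (k := ℝ) x y)).neg
  have h := hconv.le_slope_of_hasDerivAt (x := 0) (y := 1) (by simpa using hx) (by simpa using hy)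
    zero_lt_one hd.neg
  simp only [slope_def_field, Pi.neg_apply, Function.comp_apply, AffineMap.lineMap_apply_zero,
    AffineMap.lineMap_apply_one] at h
  linarith

lemma le_of_forall_pos_le_add_mul {a b c : ℝ} (h : ∀ ε > 0, a ≤ b + ε * c) : a ≤ b := by
  have hlim : Filter.Tendsto (fun ε => b + ε * c) (nhdsWithin 0 (Set.Ioi 0)) (nhds b) := by
    have := (continuous_const.add (continuous_id.mul continuous_const)).tendsto (0 : ℝ)
      (f := fun ε : ℝ => b + ε * c)
    simpa using this.mono_left nhdsWithin_le_nhds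
  exact ge_of_tendsto hlim (eventually_nhdsWithin_of_forall h)

lemma mul_log_le_mul_log_div_add {a b c : ℝ} (ha : 0 ≤ a) (hb : 0 < b) (hc : 0 < c) :
    a * log c ≤ a * log (a / b) + b * c - a := by
  rcases ha.eq_or_lt with rfl | ha
  · simp only [zero_mul, zero_div, log_zero, mul_zero, zero_add, sub_zero]; positivity
  have h := log_le_sub_one_of_pos (show 0 < b * c / a by positivity)
  rw [log_div (by positivity) ha.ne', log_mul hb.ne' hc.ne'] at h
  rw [log_div ha.ne' hb.ne']
  have := mul_le_mul_of_nonneg_left h ha.le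
  rw [show a * (b * c / a - 1) = b * c - a by field_simp] at this
  linarith

lemma exists_pos_mul_log_div_le {a b : ℝ} (ha : 0 ≤ a) (hb : 0 < b) {ε : ℝ} (hε : 0 < ε) :
    ∃ z > 0, a * log (a / b) ≤ a * log z - b * (z - 1) + (a - b) + ε := by
  rcases ha.eq_or_lt with rfl | ha
  · refine ⟨ε / b, by positivity, ?_⟩
    rw [mul_sub, mul_div_cancel₀ _ hb.ne']
    simp only [zero_mul, zero_div, zero_sub, mul_one]
    linarith
  · refine ⟨a / b, by positivity, ?_⟩
    rw [mul_sub, mul_div_cancel₀ _ hb.ne']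
    linarith

lemma sum_mul_log_le_KLdiv_add_log_sum {X : Type*} [Fintype X] [Nonempty X] {ν μ h : X → ℝ}
    (hν : ∀ x, 0 ≤ ν x) (hν1 : ∑ x, ν x = 1) (hμ : ∀ x, 0 < μ x) (hh : ∀ x, 0 < h x) :
    ∑ x, ν x * log (h x) ≤ KLdiv ν μ + log (∑ x, μ x * h x) := by
  set S := ∑ x, μ x * h x
  have hS : 0 < S := Finset.sum_pos (fun x _ => mul_pos (hμ x) (hh x)) Finset.univ_nonempty
  have hterm : ∀ x, ν x * log (h x) - ν x * log S
      ≤ ν x * log (ν x / μ x) + μ x * (h x / S) - ν x := fun x => by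
    rw [← mul_sub, ← log_div (hh x).ne' hS.ne']
    exact mul_log_le_mul_log_div_add (hν x) (hμ x) (div_pos (hh x) hS)
  have hsum := Finset.sum_le_sum fun x (_ : x ∈ Finset.univ) => hterm x
  simp only [Finset.sum_sub_distrib, Finset.sum_add_distrib, ← Finset.sum_mul, hν1,
    mul_div_assoc'] at hsum
  rw [← Finset.sum_div, div_self hS.ne'] at hsum
  unfold KLdiv
  linarith

lemma exists_KLdiv_le_sum_add {Y : Type*} [Fintype Y] {a b : Y → ℝ} (ha : ∀ y, 0 ≤ a y)
    (hb : ∀ y, 0 < b y) (hab : ∑ y, a y = ∑ y, b y) {ε : ℝ} (hε : 0 < ε) :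
    ∃ q : Y → ℝ, (∀ y, 0 < q y) ∧
      KLdiv a b ≤ ∑ y, (a y * log (q y) - b y * (q y - 1)) + Fintype.card Y * ε := by
  choose q hq_pos hq using fun y => exists_pos_mul_log_div_le (ha y) (hb y) hε
  refine ⟨q, hq_pos, ?_⟩
  have hsum := Finset.sum_le_sum fun y (_ : y ∈ Finset.univ) => hq y
  simp only [Finset.sum_add_distrib, Finset.sum_sub_distrib, hab, sub_self, add_zero,
    Finset.sum_const, Finset.card_univ, nsmul_eq_mul] at hsum
  rwa [KLdiv, Finset.sum_sub_distrib]

section Marginals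

variable {n : ℕ}

lemma sum_coordMarg (f : (Fin n → Bool) → ℝ) (i : Fin n) :
    ∑ b, coordMarg i f b = ∑ x, f x :=
  Finset.sum_fiberwise _ (fun x => x i) f

lemma coordMarg_nonneg {f : (Fin n → Bool) → ℝ} (hf : ∀ x, 0 ≤ f x) (i : Fin n) (b : Bool) :
    0 ≤ coordMarg i f b :=
  Finset.sum_nonneg fun x _ => hf x

lemma coordMarg_pos {f : (Fin n → Bool) → ℝ} (hf : ∀ x, 0 < f x) (i : Fin n) (b : Bool) :
    0 < coordMarg i f b :=
  Finset.sum_pos (fun x _ => hf x) ⟨fun _ => b, by simp⟩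

lemma sum_mul_sum_eq_sum_coordMarg (f : (Fin n → Bool) → ℝ) (g : Fin n → Bool → ℝ) :
    ∑ x, f x * ∑ i, g i (x i) = ∑ i, ∑ b, coordMarg i f b * g i b := by
  simp_rw [Finset.mul_sum]
  rw [Finset.sum_comm]
  refine Finset.sum_congr rfl fun i _ => ?_
  rw [← Finset.sum_fiberwise _ (fun x => x i)]
  refine Finset.sum_congr rfl fun b _ => ?_
  rw [coordMarg, Finset.sum_mul]
  exact Finset.sum_congr rfl fun x hx => by rw [(Finset.mem_filter.mp hx).2]

end Marginals

lemma hasDerivAt_prod_one_add_mul_rpow {ι : Type*} (s : Finset ι) (α c : ι → ℝ) :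
    HasDerivAt (fun t => ∏ i ∈ s, (1 + t * c i) ^ α i) (∑ i ∈ s, α i * c i) 0 := by
  classical
  have hfactor : ∀ i ∈ s, HasDerivAt (fun t => (1 + t * c i) ^ α i) (α i * c i) 0 := by
    intro i _
    have hlin : HasDerivAt (fun t => 1 + t * c i) (c i) 0 := by
      simpa using ((hasDerivAt_id (0 : ℝ)).mul_const (c i)).const_add 1
    simpa [mul_comm] using hlin.rpow_const (p := α i) (by simp)
  simpa using HasDerivAt.fun_finsetProd hfactor

section HomogGen

variable {n : ℕ}

def posPairs (n : ℕ) : Set ((Fin n → ℝ) × (Fin n → ℝ)) :=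
  {p | (∀ i, 0 < p.1 i) ∧ (∀ i, 0 < p.2 i)}

/-- `p.1` carries the variables `z_i` of the events `x_i = 1` (`true`), `p.2` the `w_i`. -/
def pairCoord (p : (Fin n → ℝ) × (Fin n → ℝ)) (i : Fin n) (b : Bool) : ℝ :=
  bif b then p.1 i else p.2 i

/-- The generating polynomial of the homogenization of `μ`, evaluated at `(z ^ α, w ^ α)`. -/
noncomputable def homogGen (μ : (Fin n → Bool) → ℝ) (α : Fin n → ℝ)
    (p : (Fin n → ℝ) × (Fin n → ℝ)) : ℝ :=
  ∑ x : Fin n → Bool, μ x *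
    (∏ i ∈ Finset.univ.filter (fun i => x i = true), p.1 i ^ α i) *
    (∏ i ∈ Finset.univ.filter (fun i => x i = false), p.2 i ^ α i)

lemma one_mem_posPairs : (1 : (Fin n → ℝ) × (Fin n → ℝ)) ∈ posPairs n :=
  ⟨fun _ => one_pos, fun _ => one_pos⟩

lemma pairCoord_pos {p : (Fin n → ℝ) × (Fin n → ℝ)} (hp : p ∈ posPairs n) (i : Fin n) (b : Bool) :
    0 < pairCoord p i b := by
  cases b
  exacts [hp.2 i, hp.1 i]

lemma pairCoord_lineMap_one (p : (Fin n → ℝ) × (Fin n → ℝ)) (t : ℝ) (i : Fin n) (b : Bool) :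
    pairCoord (AffineMap.lineMap 1 p t) i b = 1 + t * (pairCoord p i b - 1) := by
  cases b <;> simp [pairCoord, AffineMap.lineMap_apply_module'] <;> ring

lemma homogGen_eq_sum_prod_pairCoord (μ : (Fin n → Bool) → ℝ) (α : Fin n → ℝ)
    (p : (Fin n → ℝ) × (Fin n → ℝ)) :
    homogGen μ α p = ∑ x, μ x * ∏ i, pairCoord p i (x i) ^ α i := by
  refine Finset.sum_congr rfl fun x _ => ?_
  have hsplit : ∀ i, pairCoord p i (x i) ^ α i = if x i then p.1 i ^ α i else p.2 i ^ α i :=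
    fun i => by cases x i <;> rfl
  simp only [hsplit, Finset.prod_ite, Bool.not_eq_true, mul_assoc]

lemma homogGen_one (μ : (Fin n → Bool) → ℝ) (α : Fin n → ℝ) : homogGen μ α 1 = ∑ x, μ x := by
  simp [homogGen]

lemma hasDerivAt_homogGen_lineMap_one (μ : (Fin n → Bool) → ℝ) (α : Fin n → ℝ)
    (p : (Fin n → ℝ) × (Fin n → ℝ)) :
    HasDerivAt (fun t : ℝ => homogGen μ α (AffineMap.lineMap 1 p t))
      (∑ i, ∑ b, coordMarg i μ b * (α i * (pairCoord p i b - 1))) 0 := by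
  rw [← sum_mul_sum_eq_sum_coordMarg]
  simp only [homogGen_eq_sum_prod_pairCoord, pairCoord_lineMap_one]
  exact HasDerivAt.fun_sum fun x _ =>
    (hasDerivAt_prod_one_add_mul_rpow _ α _).const_mul (μ x)

end HomogGen

section Variational

variable {n : ℕ} {μ ν : (Fin n → Bool) → ℝ} {α : Fin n → ℝ} {p : (Fin n → ℝ) × (Fin n → ℝ)}

lemma log_homogGen_le (hμ1 : ∑ x, μ x = 1)
    (hconc : ConcaveOn ℝ (posPairs n) fun p => log (homogGen μ α p)) (hp : p ∈ posPairs n) :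
    log (homogGen μ α p) ≤ ∑ i, ∑ b, coordMarg i μ b * (α i * (pairCoord p i b - 1)) := by
  have hone : homogGen μ α 1 = 1 := (homogGen_one μ α).trans hμ1
  have hderiv := (hasDerivAt_homogGen_lineMap_one μ α p).log
    (by rw [AffineMap.lineMap_apply_zero, hone]; exact one_ne_zero)
  rw [AffineMap.lineMap_apply_zero, hone, div_one] at hderiv
  simpa [hone] using hconc.sub_le_of_hasDerivAt_lineMap one_mem_posPairs hp hderiv

lemma sum_mul_log_prod_pairCoord_rpow (hp : p ∈ posPairs n) :
    ∑ x, ν x * log (∏ i, pairCoord p i (x i) ^ α i)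
      = ∑ i, ∑ b, coordMarg i ν b * (α i * log (pairCoord p i b)) := by
  rw [← sum_mul_sum_eq_sum_coordMarg]
  refine Finset.sum_congr rfl fun x _ => ?_
  rw [log_prod fun i _ => (rpow_pos_of_pos (pairCoord_pos hp i (x i)) _).ne']
  simp only [log_rpow (pairCoord_pos hp _ _)]

theorem sum_mul_sum_coordMarg_le_KLdiv (hμ : ∀ x, 0 < μ x) (hμ1 : ∑ x, μ x = 1)
    (hν : ∀ x, 0 ≤ ν x) (hν1 : ∑ x, ν x = 1)
    (hconc : ConcaveOn ℝ (posPairs n) fun p => log (homogGen μ α p)) (hp : p ∈ posPairs n) :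
    ∑ i, α i * ∑ b, (coordMarg i ν b * log (pairCoord p i b)
        - coordMarg i μ b * (pairCoord p i b - 1)) ≤ KLdiv ν μ := by
  have hgibbs := sum_mul_log_le_KLdiv_add_log_sum hν hν1 hμ
    (h := fun x => ∏ i, pairCoord p i (x i) ^ α i)
    fun x => Finset.prod_pos fun i _ => rpow_pos_of_pos (pairCoord_pos hp i (x i)) _
  rw [← homogGen_eq_sum_prod_pairCoord, sum_mul_log_prod_pairCoord_rpow hp] at hgibbs
  have htangent := log_homogGen_le hμ1 hconc hp
  have hsplit : ∑ i, α i * ∑ b, (coordMarg i ν b * log (pairCoord p i b)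
        - coordMarg i μ b * (pairCoord p i b - 1))
      = ∑ i, ∑ b, coordMarg i ν b * (α i * log (pairCoord p i b))
        - ∑ i, ∑ b, coordMarg i μ b * (α i * (pairCoord p i b - 1)) := by
    simp only [← Finset.sum_sub_distrib, Finset.mul_sum]
    exact Finset.sum_congr rfl fun i _ => Finset.sum_congr rfl fun b _ => by ring
  linarith

end Variational

theorem stmt_16_general (n : ℕ) (μ : (Fin n → Bool) → ℝ)
    (hμpos : ∀ x, 0 < μ x) (hμ1 : ∑ x, μ x = 1)
    (α : Fin n → ℝ) (hα0 : ∀ i, 0 < α i)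
    (hconc : ConcaveOn ℝ
      {p : (Fin n → ℝ) × (Fin n → ℝ) | (∀ i, 0 < p.1 i) ∧ (∀ i, 0 < p.2 i)}
      (fun p => Real.log (∑ x : Fin n → Bool, μ x *
        (∏ i ∈ Finset.univ.filter (fun i => x i = true), p.1 i ^ α i) *
        (∏ i ∈ Finset.univ.filter (fun i => x i = false), p.2 i ^ α i)))) :
    ∀ ν : (Fin n → Bool) → ℝ, (∀ x, 0 ≤ ν x) → (∑ x, ν x = 1) →
      ∑ i, α i * KLdiv (coordMarg i ν) (coordMarg i μ) ≤ KLdiv ν μ := by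
  intro ν hν0 hν1
  refine le_of_forall_pos_le_add_mul (c := Fintype.card Bool * ∑ i, α i) fun ε hε => ?_
  choose q hq_pos hq using fun i =>
    exists_KLdiv_le_sum_add (coordMarg_nonneg hν0 i) (coordMarg_pos hμpos i)
      (by rw [sum_coordMarg, sum_coordMarg, hν1, hμ1]) hε
  set p : (Fin n → ℝ) × (Fin n → ℝ) := (fun i => q i true, fun i => q i false)
  have hpq : ∀ i b, pairCoord p i b = q i b := fun i b => by cases b <;> rfl
  have hp : p ∈ posPairs n := ⟨fun i => hq_pos i true, fun i => hq_pos i false⟩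
  have hvar := sum_mul_sum_coordMarg_le_KLdiv hμpos hμ1 hν0 hν1 hconc hp
  simp only [hpq] at hvar
  calc ∑ i, α i * KLdiv (coordMarg i ν) (coordMarg i μ)
      ≤ ∑ i, α i * (∑ b, (coordMarg i ν b * log (q i b) - coordMarg i μ b * (q i b - 1))
          + Fintype.card Bool * ε) :=
        Finset.sum_le_sum fun i _ => mul_le_mul_of_nonneg_left (hq i) (hα0 i).le
    _ = ∑ i, α i * ∑ b, (coordMarg i ν b * log (q i b) - coordMarg i μ b * (q i b - 1))
          + ε * (Fintype.card Bool * ∑ i, α i) := by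
        simp only [mul_add, Finset.sum_add_distrib, Finset.mul_sum]
        exact congrArg _ (Finset.sum_congr rfl fun i _ => by ring)
    _ ≤ KLdiv ν μ + ε * (Fintype.card Bool * ∑ i, α i) := by gcongr

theorem stmt_16 (n : ℕ) (μ : (Fin n → Bool) → ℝ)
    (hμpos : ∀ x, 0 < μ x) (hμ1 : ∑ x, μ x = 1)
    (α : Fin n → ℝ) (hα0 : ∀ i, 0 < α i) (hα1 : ∀ i, α i ≤ 1)
    (hconc : ConcaveOn ℝ
      {p : (Fin n → ℝ) × (Fin n → ℝ) | (∀ i, 0 < p.1 i) ∧ (∀ i, 0 < p.2 i)}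
      (fun p => Real.log (∑ x : Fin n → Bool, μ x *
        (∏ i ∈ Finset.univ.filter (fun i => x i = true), p.1 i ^ α i) *
        (∏ i ∈ Finset.univ.filter (fun i => x i = false), p.2 i ^ α i)))) :
    ∀ ν : (Fin n → Bool) → ℝ, (∀ x, 0 ≤ ν x) → (∑ x, ν x = 1) →
      ∑ i, α i * KLdiv (coordMarg i ν) (coordMarg i μ) ≤ KLdiv ν μ :=
  stmt_16_general n μ hμpos hμ1 α hα0 hconc
end

section
/- Let J ∈ ℝ^{n×n} be symmetric with ‖Jx‖₂ ≤ ‖x‖₂ for all x ∈ ℝⁿ, let h ∈ ℝⁿ, and let μ = μ_{J,h} be the corresponding Ising model on {−1,1}ⁿ. Let σ, τ ∈ {−1,1}ⁿ with σ ≠ τ, let i ∈ [n] be a coordinate with σ_i ≠ τ_i, and let σ^i, τ^i denote σ and τ with the i-th coordinate flipped. Then μ(σ)·μ(τ) ≤ exp(4√n)·μ(σ^i)·μ(τ^i). -/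
open Finset

/-- The ±1 spin vector associated to a Boolean configuration. -/
noncomputable def spin {n : ℕ} (x : Fin n → Bool) : Fin n → ℝ :=
  fun i => if x i then 1 else -1

/-- The Ising model `μ_{J,h}(x) ∝ exp(½⟨x,Jx⟩ + ⟨h,x⟩)` on `{−1,1}ⁿ`. -/
noncomputable def ising {n : ℕ} (J : Fin n → Fin n → ℝ) (h : Fin n → ℝ)
    (x : Fin n → Bool) : ℝ :=
  Real.exp ((1 / 2) * (∑ i, ∑ j, spin x i * J i j * spin x j) + ∑ i, h i * spin x i) /
    ∑ y : Fin n → Bool, Real.exp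
      ((1 / 2) * (∑ i, ∑ j, spin y i * J i j * spin y j) + ∑ i, h i * spin y i)

/-- Flip the `i`-th coordinate of a configuration. -/
def flipAt {n : ℕ} (x : Fin n → Bool) (i : Fin n) : Fin n → Bool :=
  Function.update x i (!(x i))

open Matrix Function

lemma update_eq_update_zero_add_single {ι M : Type*} [DecidableEq ι] [AddZeroClass M]
    (u : ι → M) (i : ι) (t : M) : update u i t = update u i 0 + Pi.single i t := by
  ext j
  by_cases hj : j = i
  · subst hj; simp
  · simp [hj]

section

variable {ι : Type*} [Fintype ι]

noncomputable def isingEnergy (J : Matrix ι ι ℝ) (h s : ι → ℝ) : ℝ :=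
  (1 / 2) * (s ⬝ᵥ J *ᵥ s) + h ⬝ᵥ s

lemma isingEnergy_add_sub_isingEnergy_sub {J : Matrix ι ι ℝ} (hJ : J.IsSymm) (h u v : ι → ℝ) :
    isingEnergy J h (u + v) - isingEnergy J h (u - v) = 2 * (v ⬝ᵥ J *ᵥ u + h ⬝ᵥ v) := by
  have hsymm : u ⬝ᵥ J *ᵥ v = v ⬝ᵥ J *ᵥ u := by
    rw [dotProduct_mulVec, ← mulVec_transpose, hJ.eq, dotProduct_comm]
  simp only [isingEnergy, mulVec_add, mulVec_sub, dotProduct_add, dotProduct_sub,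
    add_dotProduct, sub_dotProduct, hsymm]
  ring

lemma isingEnergy_update_sub_isingEnergy_update_neg [DecidableEq ι] {J : Matrix ι ι ℝ}
    (hJ : J.IsSymm) (h u : ι → ℝ) (i : ι) (t : ℝ) :
    isingEnergy J h (update u i t) - isingEnergy J h (update u i (-t)) =
      2 * t * ((J *ᵥ update u i 0) i + h i) := by
  rw [update_eq_update_zero_add_single u i t, update_eq_update_zero_add_single u i (-t),
    Pi.single_neg, ← sub_eq_add_neg, isingEnergy_add_sub_isingEnergy_sub hJ,
    single_dotProduct, dotProduct_single]
  ring

lemma abs_mulVec_apply_le {J : Matrix ι ι ℝ}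
    (hop : ∀ x : ι → ℝ,
      Real.sqrt (∑ i, (∑ j, J i j * x j) ^ 2) ≤ Real.sqrt (∑ i, x i ^ 2))
    (w : ι → ℝ) (i : ι) : |(J *ᵥ w) i| ≤ Real.sqrt (∑ j, w j ^ 2) :=
  calc |(J *ᵥ w) i| = Real.sqrt ((J *ᵥ w) i ^ 2) := (Real.sqrt_sq_eq_abs _).symm
    _ ≤ Real.sqrt (∑ k, (J *ᵥ w) k ^ 2) :=
      Real.sqrt_le_sqrt (single_le_sum (fun k _ => sq_nonneg ((J *ᵥ w) k)) (mem_univ i))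
    _ ≤ Real.sqrt (∑ j, w j ^ 2) := hop w

end

lemma spin_eq_one_or_neg_one {n : ℕ} (x : Fin n → Bool) (i : Fin n) :
    spin x i = 1 ∨ spin x i = -1 := by
  unfold spin; cases x i <;> simp

lemma spin_flipAt {n : ℕ} (x : Fin n → Bool) (i : Fin n) :
    spin (flipAt x i) = update (spin x) i (-spin x i) := by
  ext j
  by_cases hj : j = i
  · subst hj; simp only [spin, flipAt, update_self]; cases x j <;> simp
  · simp [spin, flipAt, hj]

lemma spin_apply_eq_neg_of_ne {n : ℕ} {x y : Fin n → Bool} {i : Fin n} (hi : x i ≠ y i) :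
    spin y i = -spin x i := by
  unfold spin; cases hx : x i <;> cases hy : y i <;> simp_all

lemma isingEnergy_spin {n : ℕ} (J : Fin n → Fin n → ℝ) (h : Fin n → ℝ) (x : Fin n → Bool) :
    isingEnergy J h (spin x) =
      (1 / 2) * (∑ i, ∑ j, spin x i * J i j * spin x j) + ∑ i, h i * spin x i := by
  simp only [isingEnergy, dotProduct, mulVec, mul_sum, mul_assoc]

lemma ising_eq_exp_div {n : ℕ} (J : Fin n → Fin n → ℝ) (h : Fin n → ℝ) (x : Fin n → Bool) :
    ising J h x = Real.exp (isingEnergy J h (spin x)) /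
      ∑ y : Fin n → Bool, Real.exp (isingEnergy J h (spin y)) := by
  simp only [ising, isingEnergy_spin]

lemma isingEnergy_spin_sub_flipAt {n : ℕ} {J : Matrix (Fin n) (Fin n) ℝ} (hJ : J.IsSymm)
    (h : Fin n → ℝ) (x : Fin n → Bool) (i : Fin n) :
    isingEnergy J h (spin x) - isingEnergy J h (spin (flipAt x i)) =
      2 * spin x i * ((J *ᵥ update (spin x) i 0) i + h i) := by
  have hx : spin x = update (spin x) i (spin x i) := (update_eq_self i _).symm
  rw [spin_flipAt]
  nth_rw 1 [hx]
  rw [isingEnergy_update_sub_isingEnergy_update_neg hJ]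

lemma isingEnergy_add_sub_flipAt_add {n : ℕ} {J : Matrix (Fin n) (Fin n) ℝ} (hJ : J.IsSymm)
    (h : Fin n → ℝ) {x y : Fin n → Bool} {i : Fin n} (hi : x i ≠ y i) :
    isingEnergy J h (spin x) + isingEnergy J h (spin y) -
      (isingEnergy J h (spin (flipAt x i)) + isingEnergy J h (spin (flipAt y i))) =
        2 * spin x i * (J *ᵥ (update (spin x) i 0 - update (spin y) i 0)) i := by
  have hx := isingEnergy_spin_sub_flipAt hJ h x i
  have hy := isingEnergy_spin_sub_flipAt hJ h y i
  rw [spin_apply_eq_neg_of_ne hi] at hy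
  rw [mulVec_sub, Pi.sub_apply]
  linear_combination hx + hy

lemma ising_mul_le_of_isingEnergy_le {n : ℕ} (J : Fin n → Fin n → ℝ) (h : Fin n → ℝ)
    {x y x' y' : Fin n → Bool} {c : ℝ}
    (hE : isingEnergy J h (spin x) + isingEnergy J h (spin y) ≤
      c + (isingEnergy J h (spin x') + isingEnergy J h (spin y'))) :
    ising J h x * ising J h y ≤ Real.exp c * (ising J h x' * ising J h y') := by
  simp only [ising_eq_exp_div]
  rw [div_mul_div_comm, div_mul_div_comm, ← mul_div_assoc, ← Real.exp_add, ← Real.exp_add,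
    ← Real.exp_add]
  gcongr

lemma sum_sq_update_spin_sub_le {n : ℕ} (x y : Fin n → Bool) (i : Fin n) :
    ∑ j, (update (spin x) i 0 - update (spin y) i 0) j ^ 2 ≤ 4 * n := by
  have hj (j : Fin n) : (update (spin x) i 0 - update (spin y) i 0) j ^ 2 ≤ 4 := by
    by_cases hji : j = i
    · subst hji; simp
    · simp only [Pi.sub_apply, update_of_ne hji]
      rcases spin_eq_one_or_neg_one x j with hx | hx <;>
        rcases spin_eq_one_or_neg_one y j with hy | hy <;> norm_num [hx, hy]
  simpa [mul_comm] using sum_le_sum fun j (_ : j ∈ univ) => hj j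

theorem stmt_17_general (n : ℕ) (J : Fin n → Fin n → ℝ)
    (hsymm : ∀ i j, J i j = J j i)
    (hop : ∀ x : Fin n → ℝ,
      Real.sqrt (∑ i, (∑ j, J i j * x j) ^ 2) ≤ Real.sqrt (∑ i, x i ^ 2))
    (h : Fin n → ℝ) (σ τ : Fin n → Bool)
    (i : Fin n) (hi : σ i ≠ τ i) :
    ising J h σ * ising J h τ ≤
      Real.exp (4 * Real.sqrt (n : ℝ)) *
        (ising J h (flipAt σ i) * ising J h (flipAt τ i)) := by
  have hJ : Matrix.IsSymm (J : Matrix (Fin n) (Fin n) ℝ) := IsSymm.ext fun i j => hsymm j i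
  have hgap := isingEnergy_add_sub_flipAt_add hJ h hi
  have hw : |(J *ᵥ (update (spin σ) i 0 - update (spin τ) i 0)) i| ≤ 2 * Real.sqrt n :=
    calc _ ≤ Real.sqrt (∑ j, (update (spin σ) i 0 - update (spin τ) i 0) j ^ 2) :=
          abs_mulVec_apply_le hop _ i
      _ ≤ Real.sqrt (2 ^ 2 * n) :=
          Real.sqrt_le_sqrt (by linarith [sum_sq_update_spin_sub_le σ τ i])
      _ = 2 * Real.sqrt n := by rw [Real.sqrt_mul (by norm_num), Real.sqrt_sq zero_le_two]
  apply ising_mul_le_of_isingEnergy_le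
  rcases spin_eq_one_or_neg_one σ i with hs | hs <;> rw [hs] at hgap <;>
    linarith [abs_le.mp hw]

theorem stmt_17 (n : ℕ) (J : Fin n → Fin n → ℝ)
    (hsymm : ∀ i j, J i j = J j i)
    (hop : ∀ x : Fin n → ℝ,
      Real.sqrt (∑ i, (∑ j, J i j * x j) ^ 2) ≤ Real.sqrt (∑ i, x i ^ 2))
    (h : Fin n → ℝ) (σ τ : Fin n → Bool) (hστ : σ ≠ τ)
    (i : Fin n) (hi : σ i ≠ τ i) :
    ising J h σ * ising J h τ ≤
      Real.exp (4 * Real.sqrt (n : ℝ)) *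
        (ising J h (flipAt σ i) * ising J h (flipAt τ i)) :=
  stmt_17_general n J hsymm hop h σ τ i hi
end
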